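/- arXiv:2601.22558 — 4 statements merged into one kernel-verified Lean document; each statement's English description precedes it below -/
import Mathlib

section
/- If p(z) = 1 + p₁z + p₂z² + p₃z³ + ⋯ is analytic in the unit disk with Re p(z) > 0, then |p₃ − p₁p₂| ≤ 2. -/
open Complex Metric Set Filter Topology

noncomputable section


/-- normSq identity for the Möbius map. -/
lemma cara_normSq_mobius (β t : ℂ) :
    Complex.normSq (1 - (starRingEnd ℂ) β * t) - Complex.normSq (t - β)
      = (1 - Complex.normSq β) * (1 - Complex.normSq t) := by
  simp only [Complex.normSq_apply, Complex.sub_re, Complex.sub_im, Complex.mul_re,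
    Complex.mul_im, Complex.conj_re, Complex.conj_im, Complex.one_re, Complex.one_im]
  ring

lemma cara_mobius_lt {β t : ℂ} (hβ : ‖β‖ < 1) (ht : ‖t‖ < 1) :
    ‖t - β‖ < ‖1 - (starRingEnd ℂ) β * t‖ := by
  have h1 : Complex.normSq β < 1 := by
    have := Complex.sq_norm β; nlinarith [norm_nonneg β]
  have h2 : Complex.normSq t < 1 := by
    have := Complex.sq_norm t; nlinarith [norm_nonneg t]
  have key := cara_normSq_mobius β t
  have : Complex.normSq (t - β) < Complex.normSq (1 - (starRingEnd ℂ) β * t) := by nlinarith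
  rw [Complex.norm_def, Complex.norm_def]
  exact Real.sqrt_lt_sqrt (Complex.normSq_nonneg _) this

lemma cara_mobius_denom_ne {β t : ℂ} (hβ : ‖β‖ < 1) (ht : ‖t‖ < 1) :
    1 - (starRingEnd ℂ) β * t ≠ 0 := by
  intro h
  have h2 := cara_mobius_lt hβ ht
  rw [h] at h2
  simp only [norm_zero] at h2
  exact absurd h2 (not_lt.mpr (norm_nonneg _))

lemma cara_analyticOnNhd_dslope {s : Set ℂ} (hs : IsOpen s) {f : ℂ → ℂ}
    (hf : AnalyticOnNhd ℂ f s) : AnalyticOnNhd ℂ (dslope f 0) s := by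
  intro z hz
  rcases eq_or_ne z 0 with rfl | hz0
  · rcases hf 0 hz with ⟨q, hq⟩
    exact ⟨q.fslope, hq.has_fpower_series_dslope_fslope⟩
  · have heq : (fun w => w⁻¹ * (f w - f 0)) =ᶠ[𝓝 z] dslope f 0 := by
      filter_upwards [isOpen_ne.mem_nhds hz0] with w hw
      rw [dslope_of_ne _ hw, slope_def_field]
      field_simp
      ring
    exact (((analyticAt_id.inv hz0)).mul ((hf z hz).sub analyticAt_const)).congr heq

lemma cara_deriv_deriv_congr {s : Set ℂ} (hs : IsOpen s) {f F : ℂ → ℂ}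
    (h : ∀ z ∈ s, HasDerivAt f (F z) z) {z : ℂ} (hz : z ∈ s) :
    deriv (deriv f) z = deriv F z := by
  apply Filter.EventuallyEq.deriv_eq
  filter_upwards [hs.mem_nhds hz] with w hw
  exact (h w hw).deriv

/-- Schwarz–Pick at the center. -/
lemma cara_schwarz_pick {ρ : ℝ} (hρ : 1 ≤ ρ) {g : ℂ → ℂ}
    (hg : AnalyticOnNhd ℂ g (ball 0 ρ))
    (hb : ∀ z ∈ ball (0:ℂ) ρ, ‖g z‖ < 1) :
    ‖deriv g 0‖ ≤ 1 - ‖g 0‖ ^ 2 := by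
  have hρ0 : (0:ℝ) < ρ := lt_of_lt_of_le one_pos hρ
  have h0 : (0:ℂ) ∈ ball (0:ℂ) ρ := by simpa using hρ0
  set β := g 0 with hβdef
  have hβ : ‖β‖ < 1 := hb 0 h0
  set v : ℂ → ℂ := fun z => 1 - (starRingEnd ℂ) β * g z with hvdef
  have hvne : ∀ z ∈ ball (0:ℂ) ρ, v z ≠ 0 := fun z hz => cara_mobius_denom_ne hβ (hb z hz)
  set ψ : ℂ → ℂ := fun z => (g z - β) / v z with hψdef
  have hψa : AnalyticOnNhd ℂ ψ (ball 0 ρ) :=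
    (hg.sub analyticOnNhd_const).div
      (analyticOnNhd_const.sub (analyticOnNhd_const.mul hg)) hvne
  have hψ0 : ψ 0 = 0 := by simp [hψdef, hβdef]
  have hmaps : MapsTo ψ (ball (0:ℂ) ρ) (ball (ψ 0) 1) := by
    intro z hz
    rw [hψ0]
    simp only [mem_ball, dist_zero_right]
    rw [hψdef]
    simp only [norm_div]
    rw [div_lt_one (by
      have := cara_mobius_lt hβ (hb z hz)
      have h3 := norm_nonneg (g z - β)
      linarith)]
    exact cara_mobius_lt hβ (hb z hz)
  have hsch := Complex.norm_dslope_le_div_of_mapsTo_ball hψa.differentiableOn (hmaps.mono_right ball_subset_closedBall) h0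
  rw [dslope_same] at hsch
  -- compute deriv ψ 0
  have hgd : HasDerivAt g (deriv g 0) 0 := (hg 0 h0).differentiableAt.hasDerivAt
  have hu : HasDerivAt (fun z => g z - β) (deriv g 0) 0 := hgd.sub_const β
  have hvd : HasDerivAt v (-((starRingEnd ℂ) β * deriv g 0)) 0 := by
    simpa using (hgd.const_mul ((starRingEnd ℂ) β)).const_sub 1
  have hψd : HasDerivAt ψ
      ((deriv g 0 * v 0 - (g 0 - β) * -((starRingEnd ℂ) β * deriv g 0)) / v 0 ^ 2) 0 :=
    hu.div hvd (hvne 0 h0)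
  have hgβ : g 0 - β = 0 := by rw [hβdef]; ring
  have hv0 : v 0 = ((1 - ‖β‖ ^ 2 : ℝ) : ℂ) := by
    rw [hvdef]
    simp only [← hβdef]
    rw [show (starRingEnd ℂ) β * β = (Complex.normSq β : ℂ) by
      rw [mul_comm, Complex.mul_conj]]
    push_cast [← Complex.sq_norm]
    ring
  have hD : (0:ℝ) < 1 - ‖β‖ ^ 2 := by nlinarith [norm_nonneg β]
  have hderiv : deriv ψ 0 = deriv g 0 / ((1 - ‖β‖ ^ 2 : ℝ) : ℂ) := by
    have hne : ((1 - ‖β‖ ^ 2 : ℝ) : ℂ) ≠ 0 := by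
      simpa using Complex.ofReal_ne_zero.mpr hD.ne'
    have haux : ∀ d c : ℂ, c ≠ 0 → d * c / c ^ 2 = d / c := by
      intro d c hc; field_simp
    rw [hψd.deriv, hgβ, hv0, zero_mul, sub_zero, haux _ _ hne]
  rw [hderiv] at hsch
  rw [norm_div] at hsch
  have habs : ‖((1 - ‖β‖ ^ 2 : ℝ) : ℂ)‖ = 1 - ‖β‖ ^ 2 := by
    rw [Complex.norm_real, Real.norm_eq_abs, abs_of_pos hD]
  rw [habs] at hsch
  have h1ρ : 1 / ρ ≤ 1 := by rw [div_le_one hρ0]; exact hρ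
  calc ‖deriv g 0‖
      = ‖deriv g 0‖ / (1 - ‖β‖ ^ 2) * (1 - ‖β‖ ^ 2) := by
        field_simp
    _ ≤ 1 * (1 - ‖β‖ ^ 2) := by
        apply mul_le_mul_of_nonneg_right (hsch.trans h1ρ) hD.le
    _ = 1 - ‖β‖ ^ 2 := one_mul _

/-- derivative relations for `g = dslope f 0` when `f 0 = 0`. -/
lemma cara_dslope_derivs {s : Set ℂ} (hs : IsOpen s) (h0 : (0:ℂ) ∈ s) {f : ℂ → ℂ}
    (hf : AnalyticOnNhd ℂ f s) (hf0 : f 0 = 0) :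
    deriv f 0 = dslope f 0 0
    ∧ deriv (deriv f) 0 = 2 * deriv (dslope f 0) 0
    ∧ deriv (deriv (deriv f)) 0 = 3 * deriv (deriv (dslope f 0)) 0 := by
  set g := dslope f 0 with hgdef
  have hg : AnalyticOnNhd ℂ g s := cara_analyticOnNhd_dslope hs hf
  have hg1 : AnalyticOnNhd ℂ (deriv g) s := hg.deriv
  have hg2 : AnalyticOnNhd ℂ (deriv (deriv g)) s := hg1.deriv
  have hfg : ∀ z, f z = z * g z := by
    intro z
    rcases eq_or_ne z 0 with rfl | hz
    · simp [hf0]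
    · rw [hgdef, dslope_of_ne _ hz, slope_def_field, hf0]
      field_simp
      ring
  have h1 : ∀ z ∈ s, HasDerivAt f (g z + z * deriv g z) z := by
    intro z hz
    have hd : HasDerivAt (fun w => w * g w) (1 * g z + z * deriv g z) z :=
      (hasDerivAt_id z).mul (hg z hz).differentiableAt.hasDerivAt
    rw [one_mul] at hd
    exact hd.congr_of_eventuallyEq (Filter.Eventually.of_forall fun w => (hfg w))
  have h2 : ∀ z ∈ s, HasDerivAt (fun z => g z + z * deriv g z)
      (2 * deriv g z + z * deriv (deriv g) z) z := by
    intro z hz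
    have hd : HasDerivAt (fun w => g w + w * deriv g w)
        (deriv g z + (1 * deriv g z + z * deriv (deriv g) z)) z :=
      (hg z hz).differentiableAt.hasDerivAt.add
        ((hasDerivAt_id z).mul (hg1 z hz).differentiableAt.hasDerivAt)
    convert hd using 1; ring
  refine ⟨(dslope_same f 0).symm, ?_, ?_⟩
  · rw [cara_deriv_deriv_congr hs h1 h0, (h2 0 h0).deriv]
    ring
  · have h3 : ∀ z ∈ s, deriv (deriv f) z = 2 * deriv g z + z * deriv (deriv g) z :=
      fun z hz => (cara_deriv_deriv_congr hs h1 hz).trans (h2 z hz).deriv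
    have h4 : deriv (deriv (deriv f)) 0
        = deriv (fun z => 2 * deriv g z + z * deriv (deriv g) z) 0 := by
      apply Filter.EventuallyEq.deriv_eq
      filter_upwards [hs.mem_nhds h0] with w hw
      exact h3 w hw
    have h5 : HasDerivAt (fun z => 2 * deriv g z + z * deriv (deriv g) z)
        (2 * deriv (deriv g) 0 + (1 * deriv (deriv g) 0 + 0 * deriv (deriv (deriv g)) 0)) 0 :=
      ((hg1 0 h0).differentiableAt.hasDerivAt.const_mul 2).add
        ((hasDerivAt_id 0).mul (hg2 0 h0).differentiableAt.hasDerivAt)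
    rw [h4, h5.deriv]
    ring

/-- The bounded analytic function obtained from a Schwarz-type function by dividing by z. -/
lemma cara_dslope_bound {R : ℝ} (hR : 1 < R) {w : ℂ → ℂ}
    (hw : AnalyticOnNhd ℂ w (ball 0 R)) (hw0 : w 0 = 0)
    (hw1 : ∀ z ∈ ball (0:ℂ) R, ‖w z‖ < 1) :
    ∀ z ∈ ball (0:ℂ) R, ‖dslope w 0 z‖ < 1 := by
  have hR0 : (0:ℝ) < R := lt_trans one_pos hR
  intro z hz
  have hmaps : MapsTo w (ball (0:ℂ) R) (ball (w 0) 1) := by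
    intro y hy
    rw [hw0, mem_ball, dist_zero_right]
    exact hw1 y hy
  have hle := Complex.norm_dslope_le_div_of_mapsTo_ball hw.differentiableOn (hmaps.mono_right ball_subset_closedBall) hz
  calc ‖dslope w 0 z‖ ≤ 1 / R := hle
    _ < 1 := by rw [div_lt_one hR0]; exact hR

lemma cara_key {R : ℝ} (hR : 1 < R) {w : ℂ → ℂ} (hw : AnalyticOnNhd ℂ w (ball 0 R))
    (hw0 : w 0 = 0) (hw1 : ∀ z ∈ ball (0:ℂ) R, ‖w z‖ < 1) :
    ‖deriv (deriv (deriv w)) 0 / 6 - deriv w 0 ^ 3‖ ≤ 1 := by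
  have hR0 : (0:ℝ) < R := lt_trans one_pos hR
  have hs : IsOpen (ball (0:ℂ) R) := isOpen_ball
  have h0 : (0:ℂ) ∈ ball (0:ℂ) R := by simpa using hR0
  set φ := dslope w 0 with hφdef
  have hφa : AnalyticOnNhd ℂ φ (ball 0 R) := cara_analyticOnNhd_dslope hs hw
  have hφb : ∀ z ∈ ball (0:ℂ) R, ‖φ z‖ < 1 := cara_dslope_bound hR hw hw0 hw1
  obtain ⟨e1, e2, e3⟩ := cara_dslope_derivs hs h0 hw hw0
  set β := φ 0 with hβdef
  have hβ : ‖β‖ < 1 := hφb 0 h0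
  set v : ℂ → ℂ := fun z => 1 - (starRingEnd ℂ) β * φ z with hvdef
  have hvne : ∀ z ∈ ball (0:ℂ) R, v z ≠ 0 := fun z hz => cara_mobius_denom_ne hβ (hφb z hz)
  set ψ : ℂ → ℂ := fun z => (φ z - β) / v z with hψdef
  have hψa : AnalyticOnNhd ℂ ψ (ball 0 R) :=
    (hφa.sub analyticOnNhd_const).div
      (analyticOnNhd_const.sub (analyticOnNhd_const.mul hφa)) hvne
  have hψ0 : ψ 0 = 0 := by simp [hψdef, ← hβdef]
  have hψb : ∀ z ∈ ball (0:ℂ) R, ‖ψ z‖ < 1 := by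
    intro z hz
    rw [hψdef]
    simp only [norm_div]
    rw [div_lt_one (by
      have h1 := cara_mobius_lt hβ (hφb z hz)
      have h2 := norm_nonneg (φ z - β)
      linarith)]
    exact cara_mobius_lt hβ (hφb z hz)
  set h := dslope ψ 0 with hhdef
  have hha : AnalyticOnNhd ℂ h (ball 0 R) := cara_analyticOnNhd_dslope hs hψa
  have hhb : ∀ z ∈ ball (0:ℂ) R, ‖h z‖ < 1 := cara_dslope_bound hR hψa hψ0 hψb
  obtain ⟨f1, f2, -⟩ := cara_dslope_derivs hs h0 hψa hψ0
  have hSP : ‖deriv h 0‖ ≤ 1 - ‖h 0‖ ^ 2 :=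
    cara_schwarz_pick hR.le hha hhb
  -- the constant c = 1 - |β|²
  set c : ℂ := 1 - (starRingEnd ℂ) β * β with hcdef
  have hc : c = ((1 - ‖β‖ ^ 2 : ℝ) : ℂ) := by
    rw [hcdef, show (starRingEnd ℂ) β * β = (Complex.normSq β : ℂ) by
      rw [mul_comm, Complex.mul_conj]]
    push_cast [← Complex.sq_norm]
    ring
  have hDpos : (0:ℝ) < 1 - ‖β‖ ^ 2 := by nlinarith [norm_nonneg β]
  have hcne : c ≠ 0 := by
    rw [hc]; simpa using Complex.ofReal_ne_zero.mpr hDpos.ne'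
  have hv0 : v 0 = c := rfl
  -- derivative of ψ on the ball
  have hDψ : ∀ z ∈ ball (0:ℂ) R, HasDerivAt ψ (deriv φ z * c / v z ^ 2) z := by
    intro z hz
    have hφd : HasDerivAt φ (deriv φ z) z := (hφa z hz).differentiableAt.hasDerivAt
    have hu : HasDerivAt (fun y => φ y - β) (deriv φ z) z := hφd.sub_const β
    have hvd : HasDerivAt v (-((starRingEnd ℂ) β * deriv φ z)) z := by
      simpa using (hφd.const_mul ((starRingEnd ℂ) β)).const_sub 1
    have hdiv : HasDerivAt ψ _ z := hu.div hvd (hvne z hz)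
    convert hdiv using 1
    have hvz : v z = 1 - (starRingEnd ℂ) β * φ z := by rw [hvdef]
    rw [hvz, hcdef]
    ring
  have hd1 : deriv ψ 0 = deriv φ 0 * c / c ^ 2 := by
    rw [(hDψ 0 h0).deriv, hv0]
  have hh0 : h 0 = deriv ψ 0 := dslope_same ψ 0
  have hb1 : deriv φ 0 = c * h 0 := by
    rw [hh0, hd1]
    field_simp
  -- second derivative of ψ at 0
  have hN : HasDerivAt (fun z => deriv φ z * c) (deriv (deriv φ) 0 * c) 0 :=
    ((hφa.deriv 0 h0).differentiableAt.hasDerivAt).mul_const c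
  have hv0d : HasDerivAt v (-((starRingEnd ℂ) β * deriv φ 0)) 0 := by
    simpa using (((hφa 0 h0).differentiableAt.hasDerivAt).const_mul ((starRingEnd ℂ) β)).const_sub 1
  have hM : HasDerivAt (fun z => v z ^ 2)
      ((2:ℕ) * v 0 ^ 1 * -((starRingEnd ℂ) β * deriv φ 0)) 0 := hv0d.pow 2
  have hQ : HasDerivAt (fun z => deriv φ z * c / v z ^ 2) _ 0 := hN.div hM (pow_ne_zero 2 (hvne 0 h0))
  have hd2 : deriv (deriv ψ) 0
      = (deriv (deriv φ) 0 * c * v 0 ^ 2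
          - deriv φ 0 * c * ((2:ℕ) * v 0 ^ 1 * -((starRingEnd ℂ) β * deriv φ 0))) / (v 0 ^ 2) ^ 2 := by
    rw [cara_deriv_deriv_congr hs hDψ h0, hQ.deriv]
  -- solve for deriv (deriv φ) 0
  have hA2 : deriv (deriv φ) 0 = 2 * c * deriv h 0 - 2 * (starRingEnd ℂ) β * c * (h 0) ^ 2 := by
    have heq := f2.symm.trans hd2
    rw [← hhdef] at heq
    rw [hv0, hb1] at heq
    field_simp at heq
    apply mul_right_cancel₀ (pow_ne_zero 3 hcne)
    rw [hcdef] at heq ⊢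
    linear_combination -(1 - (starRingEnd ℂ) β * β) ^ 3 * heq
  rw [← hφdef] at e1 e3
  have hZ : deriv (deriv (deriv w)) 0 / 6 - deriv w 0 ^ 3
      = c * deriv h 0 - (starRingEnd ℂ) β * c * (h 0) ^ 2 - β ^ 3 := by
    rw [e3, e1, ← hβdef, hA2]
    ring
  rw [hZ]
  have tri : ∀ x y z : ℂ, ‖x - y - z‖
      ≤ ‖x‖ + ‖y‖ + ‖z‖ := by
    intro x y z
    have h1 : ‖x - y - z‖ ≤ ‖x - y‖ + ‖z‖ := by
      simpa using norm_sub_le (x - y) z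
    have h2 : ‖x - y‖ ≤ ‖x‖ + ‖y‖ := by
      simpa using norm_sub_le x y
    linarith
  have habsc : ‖c‖ = 1 - ‖β‖ ^ 2 := by
    rw [hc, Complex.norm_real, Real.norm_eq_abs, abs_of_pos hDpos]
  have hs1 : ‖h 0‖ < 1 := hhb 0 h0
  have hbd := tri (c * deriv h 0) ((starRingEnd ℂ) β * c * (h 0) ^ 2) (β ^ 3)
  rw [norm_mul, norm_mul, norm_mul, norm_pow, norm_pow, Complex.norm_conj, habsc] at hbd
  set t := ‖β‖
  set u := ‖h 0‖
  set b2 := ‖deriv h 0‖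
  have ht0 : 0 ≤ t := norm_nonneg β
  have hu0 : 0 ≤ u := norm_nonneg (h 0)
  have hb20 : 0 ≤ b2 := norm_nonneg (deriv h 0)
  have key : (1 - t ^ 2) * b2 + t * (1 - t ^ 2) * u ^ 2 + t ^ 3 ≤ 1 := by
    nlinarith [mul_nonneg (mul_nonneg ht0 ht0) (sub_nonneg.mpr hβ.le),
      mul_nonneg (mul_nonneg hu0 hu0) (sub_nonneg.mpr hβ.le),
      mul_le_mul_of_nonneg_left hSP hDpos.le,
      mul_nonneg hDpos.le (mul_nonneg (mul_nonneg hu0 hu0) (sub_nonneg.mpr hβ.le))]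
  exact hbd.trans key

lemma cara_bound_r (p : ℂ → ℂ)
    (hp : AnalyticOnNhd ℂ p (Metric.ball 0 1))
    (hp0 : p 0 = 1)
    (hre : ∀ z ∈ Metric.ball (0 : ℂ) 1, 0 < (p z).re)
    {r : ℝ} (hr0 : 0 < r) (hr1 : r < 1) :
    ‖deriv (deriv (deriv p)) 0 / 6
      - deriv p 0 * (deriv (deriv p) 0 / 2)‖ ≤ 2 / r ^ 3 := by
  have hs : IsOpen (ball (0:ℂ) 1) := isOpen_ball
  have h0 : (0:ℂ) ∈ ball (0:ℂ) 1 := by simpa using one_pos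
  -- the function w₀ = (p-1)/(p+1)
  set w₀ : ℂ → ℂ := fun z => (p z - 1) / (p z + 1) with hw₀def
  have hvne : ∀ z ∈ ball (0:ℂ) 1, p z + 1 ≠ 0 := by
    intro z hz hc
    have h1 : (p z + 1).re = 0 := by rw [hc]; simp
    have h2 : (p z + 1).re = (p z).re + 1 := by simp
    have := hre z hz
    rw [h2] at h1
    linarith
  have hw₀a : AnalyticOnNhd ℂ w₀ (ball 0 1) :=
    (hp.sub analyticOnNhd_const).div (hp.add analyticOnNhd_const) hvne
  have hw₀0 : w₀ 0 = 0 := by simp [hw₀def, hp0]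
  have hw₀1 : ∀ z ∈ ball (0:ℂ) 1, ‖w₀ z‖ < 1 := by
    intro z hz
    have hns : Complex.normSq (p z - 1) < Complex.normSq (p z + 1) := by
      have := hre z hz
      simp only [Complex.normSq_apply, Complex.sub_re, Complex.sub_im, Complex.add_re,
        Complex.add_im, Complex.one_re, Complex.one_im]
      nlinarith
    have habs : ‖p z - 1‖ < ‖p z + 1‖ := by
      rw [Complex.norm_def, Complex.norm_def]
      exact Real.sqrt_lt_sqrt (Complex.normSq_nonneg _) hns
    rw [hw₀def]
    simp only [norm_div]
    rw [div_lt_one (lt_of_le_of_lt (norm_nonneg _) habs)]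
    exact habs
  -- derivative formulas for w₀ in terms of p
  set P1 : ℂ → ℂ := deriv p with hP1def
  set P2 : ℂ → ℂ := deriv P1 with hP2def
  set P3 : ℂ → ℂ := deriv P2 with hP3def
  have hP1a : AnalyticOnNhd ℂ P1 (ball 0 1) := hp.deriv
  have hP2a : AnalyticOnNhd ℂ P2 (ball 0 1) := hP1a.deriv
  have hD1 : ∀ z ∈ ball (0:ℂ) 1, HasDerivAt w₀ (2 * P1 z / (p z + 1) ^ 2) z := by
    intro z hz
    have hpd : HasDerivAt p (P1 z) z := (hp z hz).differentiableAt.hasDerivAt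
    have hu : HasDerivAt (fun y => p y - 1) (P1 z) z := hpd.sub_const 1
    have hv : HasDerivAt (fun y => p y + 1) (P1 z) z := hpd.add_const 1
    have hdiv : HasDerivAt w₀ _ z := hu.div hv (hvne z hz)
    convert hdiv using 1
    ring
  have hD2 : ∀ z ∈ ball (0:ℂ) 1, HasDerivAt (fun y => 2 * P1 y / (p y + 1) ^ 2)
      ((2 * P2 z * (p z + 1) ^ 2 - 2 * P1 z * (2 * (p z + 1) ^ 1 * P1 z)) / ((p z + 1) ^ 2) ^ 2)
      z := by
    intro z hz
    have hN : HasDerivAt (fun y => 2 * P1 y) (2 * P2 z) z :=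
      (hP1a z hz).differentiableAt.hasDerivAt.const_mul 2
    have hv : HasDerivAt (fun y => p y + 1) (P1 z) z :=
      (hp z hz).differentiableAt.hasDerivAt.add_const 1
    have hM : HasDerivAt (fun y => (p y + 1) ^ 2) ((2:ℕ) * (p z + 1) ^ 1 * P1 z) z := hv.pow 2
    exact hN.div hM (pow_ne_zero 2 (hvne z hz))
  have hw₀d1 : deriv w₀ 0 = P1 0 / 2 := by
    rw [(hD1 0 h0).deriv, hp0]
    norm_num
    ring
  have hw₀d2 : ∀ z ∈ ball (0:ℂ) 1, deriv (deriv w₀) z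
      = (2 * P2 z * (p z + 1) ^ 2 - 2 * P1 z * (2 * (p z + 1) ^ 1 * P1 z)) / ((p z + 1) ^ 2) ^ 2 :=
    fun z hz => (cara_deriv_deriv_congr hs hD1 hz).trans (hD2 z hz).deriv
  have hw₀d3 : deriv (deriv (deriv w₀)) 0
      = P3 0 / 2 - (3/2) * P1 0 * P2 0 + (3/4) * P1 0 ^ 3 := by
    have heq : deriv (deriv (deriv w₀)) 0 = deriv (fun z =>
        (2 * P2 z * (p z + 1) ^ 2 - 2 * P1 z * (2 * (p z + 1) ^ 1 * P1 z)) / ((p z + 1) ^ 2) ^ 2) 0 := by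
      apply Filter.EventuallyEq.deriv_eq
      filter_upwards [hs.mem_nhds h0] with z hz
      exact hw₀d2 z hz
    -- compute the derivative of the explicit formula at 0
    have hpd : HasDerivAt p (P1 0) 0 := (hp 0 h0).differentiableAt.hasDerivAt
    have hv : HasDerivAt (fun y => p y + 1) (P1 0) 0 := hpd.add_const 1
    have hN : HasDerivAt (fun y => 2 * P2 y * (p y + 1) ^ 2 - 2 * P1 y * (2 * (p y + 1) ^ 1 * P1 y))
        (((2 * P3 0) * (p 0 + 1) ^ 2 + (2 * P2 0) * ((2:ℕ) * (p 0 + 1) ^ 1 * P1 0))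
          - ((2 * P2 0) * (2 * (p 0 + 1) ^ 1 * P1 0)
            + 2 * P1 0 * ((2 * (P1 0 * P1 0 + (p 0 + 1) * P2 0)) * 1
              ))) 0 := by
      have h1 : HasDerivAt (fun y => 2 * P2 y * (p y + 1) ^ 2)
          ((2 * P3 0) * (p 0 + 1) ^ 2 + (2 * P2 0) * ((2:ℕ) * (p 0 + 1) ^ 1 * P1 0)) 0 :=
        ((hP2a 0 h0).differentiableAt.hasDerivAt.const_mul 2).mul (hv.pow 2)
      have h2 : HasDerivAt (fun y => 2 * P1 y * (2 * (p y + 1) ^ 1 * P1 y))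
          ((2 * P2 0) * (2 * (p 0 + 1) ^ 1 * P1 0)
            + 2 * P1 0 * ((2 * (P1 0 * P1 0 + (p 0 + 1) * P2 0)) * 1)) 0 := by
        have ha : HasDerivAt (fun y => 2 * P1 y) (2 * P2 0) 0 :=
          (hP1a 0 h0).differentiableAt.hasDerivAt.const_mul 2
        have hb : HasDerivAt (fun y => 2 * (p y + 1) ^ 1 * P1 y)
            ((2 * (P1 0 * P1 0 + (p 0 + 1) * P2 0)) * 1) 0 := by
          have hc : HasDerivAt (fun y => (p y + 1) ^ 1 * P1 y)
              (P1 0 * P1 0 + (p 0 + 1) ^ 1 * P2 0) 0 := by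
            simpa [pow_one] using
              (show HasDerivAt (fun y => (p y + 1) * P1 y) (P1 0 * P1 0 + (p 0 + 1) * P2 0) 0 from hv.mul (hP1a 0 h0).differentiableAt.hasDerivAt)
          have := hc.const_mul 2
          simpa [pow_one, mul_comm, mul_assoc, mul_left_comm] using this.mul_const 1
        exact ha.mul hb
      exact h1.sub h2
    have hM : HasDerivAt (fun y => ((p y + 1) ^ 2) ^ 2)
        ((2:ℕ) * ((p 0 + 1) ^ 2) ^ 1 * ((2:ℕ) * (p 0 + 1) ^ 1 * P1 0)) 0 := (hv.pow 2).pow 2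
    have hdiv : HasDerivAt (fun z => (2 * P2 z * (p z + 1) ^ 2 - 2 * P1 z * (2 * (p z + 1) ^ 1 * P1 z)) / ((p z + 1) ^ 2) ^ 2) _ 0 := hN.div hM (pow_ne_zero 2 (pow_ne_zero 2 (hvne 0 h0)))
    rw [heq, hdiv.deriv, hp0]
    norm_num
    ring
  -- scaling
  set cc : ℂ := (r : ℂ) with hccdef
  have hccne : cc ≠ 0 := by
    rw [hccdef]; exact_mod_cast hr0.ne'
  have hRr : 1 < 1 / r := by rw [lt_div_iff₀ hr0]; simpa using hr1
  have hmem : ∀ z : ℂ, z ∈ ball (0:ℂ) (1/r) → cc * z ∈ ball (0:ℂ) 1 := by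
    intro z hz
    rw [mem_ball, dist_zero_right] at hz ⊢
    rw [norm_mul, hccdef, Complex.norm_real, Real.norm_eq_abs, abs_of_pos hr0]
    calc r * ‖z‖ < r * (1/r) := by
          apply mul_lt_mul_of_pos_left hz hr0
      _ = 1 := by field_simp
  set W : ℂ → ℂ := fun z => w₀ (cc * z) with hWdef
  have hWa : AnalyticOnNhd ℂ W (ball 0 (1/r)) := by
    intro z hz
    exact (hw₀a _ (hmem z hz)).comp ((analyticAt_const.mul analyticAt_id))
  have hW0 : W 0 = 0 := by simp [hWdef, hw₀0]
  have hW1 : ∀ z ∈ ball (0:ℂ) (1/r), ‖W z‖ < 1 :=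
    fun z hz => hw₀1 _ (hmem z hz)
  have hkey := cara_key hRr hWa hW0 hW1
  -- derivatives of W
  have hsR : IsOpen (ball (0:ℂ) (1/r)) := isOpen_ball
  have h0R : (0:ℂ) ∈ ball (0:ℂ) (1/r) := by
    rw [mem_ball, dist_zero_right]; simpa using lt_trans one_pos hRr
  set Q1 : ℂ → ℂ := deriv w₀ with hQ1def
  set Q2 : ℂ → ℂ := deriv Q1 with hQ2def
  have hQ1a : AnalyticOnNhd ℂ Q1 (ball 0 1) := hw₀a.deriv
  have hQ2a : AnalyticOnNhd ℂ Q2 (ball 0 1) := hQ1a.deriv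
  have hlin : ∀ z : ℂ, HasDerivAt (fun y => cc * y) cc z := by
    intro z
    simpa using (hasDerivAt_id z).const_mul cc
  have hS1 : ∀ z ∈ ball (0:ℂ) (1/r), HasDerivAt W (cc * Q1 (cc * z)) z := by
    intro z hz
    have hcomp := HasDerivAt.comp z ((hw₀a _ (hmem z hz)).differentiableAt.hasDerivAt) (hlin z)
    have h2 : HasDerivAt W (Q1 (cc * z) * cc) z := hcomp
    convert h2 using 1
    ring
  have hS2 : ∀ z ∈ ball (0:ℂ) (1/r),
      HasDerivAt (fun y => cc * Q1 (cc * y)) (cc ^ 2 * Q2 (cc * z)) z := by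
    intro z hz
    have : HasDerivAt (fun y => cc * Q1 (cc * y)) _ z := (HasDerivAt.comp z ((hQ1a _ (hmem z hz)).differentiableAt.hasDerivAt) (hlin z)).const_mul cc
    convert this using 1
    ring
  have hS3 : HasDerivAt (fun y => cc ^ 2 * Q2 (cc * y)) (cc ^ 3 * deriv Q2 0) 0 := by
    have h00 : cc * 0 ∈ ball (0:ℂ) 1 := by simpa using h0
    have : HasDerivAt (fun y => cc ^ 2 * Q2 (cc * y)) _ 0 := (HasDerivAt.comp 0 ((hQ2a _ h00).differentiableAt.hasDerivAt) (hlin 0)).const_mul (cc ^ 2)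
    convert this using 1
    rw [mul_zero]
    ring
  have hWd1 : deriv W 0 = cc * Q1 0 := by
    have := (hS1 0 h0R).deriv
    simpa using this
  have hWd3 : deriv (deriv (deriv W)) 0 = cc ^ 3 * deriv Q2 0 := by
    have h2 : ∀ z ∈ ball (0:ℂ) (1/r), deriv (deriv W) z = cc ^ 2 * Q2 (cc * z) :=
      fun z hz => (cara_deriv_deriv_congr hsR hS1 hz).trans (hS2 z hz).deriv
    have h3 : deriv (deriv (deriv W)) 0 = deriv (fun y => cc ^ 2 * Q2 (cc * y)) 0 := by
      apply Filter.EventuallyEq.deriv_eq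
      filter_upwards [hsR.mem_nhds h0R] with z hz
      exact h2 z hz
    rw [h3, hS3.deriv]
  rw [hWd1, hWd3] at hkey
  -- final algebra
  have hfact : cc ^ 3 * deriv Q2 0 / 6 - (cc * Q1 0) ^ 3
      = cc ^ 3 * (deriv Q2 0 / 6 - Q1 0 ^ 3) := by ring
  rw [hfact] at hkey
  rw [norm_mul, norm_pow] at hkey
  have hccabs : ‖cc‖ = r := by
    rw [hccdef, Complex.norm_real, Real.norm_eq_abs, abs_of_pos hr0]
  rw [hccabs] at hkey
  have hr3 : (0:ℝ) < r ^ 3 := by positivity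
  have hkey2 : ‖deriv Q2 0 / 6 - Q1 0 ^ 3‖ ≤ 1 / r ^ 3 := by
    rw [le_div_iff₀ hr3]
    linarith [hkey]
  -- identify with p-derivatives
  have hiden : deriv Q2 0 / 6 - Q1 0 ^ 3
      = (deriv (deriv (deriv p)) 0 / 6 - deriv p 0 * (deriv (deriv p) 0 / 2)) / 2 := by
    have e1 : Q1 0 = P1 0 / 2 := hw₀d1
    have e3 : deriv Q2 0 = P3 0 / 2 - (3/2) * P1 0 * P2 0 + (3/4) * P1 0 ^ 3 := hw₀d3
    rw [e1, e3, hP3def, hP2def, hP1def]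
    ring
  rw [hiden] at hkey2
  rw [norm_div] at hkey2
  simp only [Complex.norm_two] at hkey2
  calc ‖deriv (deriv (deriv p)) 0 / 6 - deriv p 0 * (deriv (deriv p) 0 / 2)‖
      = ‖deriv (deriv (deriv p)) 0 / 6 - deriv p 0 * (deriv (deriv p) 0 / 2)‖ / 2 * 2 := by
        ring
    _ ≤ 1 / r ^ 3 * 2 := mul_le_mul_of_nonneg_right hkey2 (by norm_num)
    _ = 2 / r ^ 3 := by ring


/-- Carathéodory class: `|p₃ − p₁ p₂| ≤ 2` where `pₙ = p⁽ⁿ⁾(0)/n!`. -/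
theorem caratheodory_p3_sub_p1_p2 (p : ℂ → ℂ)
    (hp : AnalyticOnNhd ℂ p (Metric.ball 0 1))
    (hp0 : p 0 = 1)
    (hre : ∀ z ∈ Metric.ball (0 : ℂ) 1, 0 < (p z).re) :
    ‖iteratedDeriv 3 p 0 / (Nat.factorial 3 : ℂ)
      - (iteratedDeriv 1 p 0 / (Nat.factorial 1 : ℂ))
        * (iteratedDeriv 2 p 0 / (Nat.factorial 2 : ℂ))‖ ≤ 2 := by
  have h3 : iteratedDeriv 3 p 0 = deriv (deriv (deriv p)) 0 := by
    simp [iteratedDeriv_succ, iteratedDeriv_zero]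
  have h1 : iteratedDeriv 1 p 0 = deriv p 0 := by
    simp [iteratedDeriv_succ, iteratedDeriv_zero]
  have h2 : iteratedDeriv 2 p 0 = deriv (deriv p) 0 := by
    simp [iteratedDeriv_succ, iteratedDeriv_zero]
  have hfac3 : (Nat.factorial 3 : ℂ) = 6 := by norm_num [Nat.factorial]
  have hfac1 : (Nat.factorial 1 : ℂ) = 1 := by norm_num [Nat.factorial]
  have hfac2 : (Nat.factorial 2 : ℂ) = 2 := by norm_num [Nat.factorial]
  rw [h3, h1, h2, hfac3, hfac1, hfac2, div_one]
  have hlim : Tendsto (fun r : ℝ => 2 / r ^ 3) (𝓝[<] (1:ℝ)) (𝓝 2) := by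
    have hc : ContinuousAt (fun r : ℝ => 2 / r ^ 3) 1 :=
      continuousAt_const.div (continuousAt_id.pow 3) (by norm_num)
    have h := hc.tendsto.mono_left (nhdsWithin_le_nhds (s := Iio (1:ℝ)))
    norm_num at h
    exact h
  apply ge_of_tendsto hlim
  filter_upwards [Ioo_mem_nhdsLT_of_mem (by norm_num : (1:ℝ) ∈ Ioc (0:ℝ) 1)] with r hr
  exact cara_bound_r p hp hp0 hre hr.1 hr.2

end
end

section
/- If h is analytic on the unit disk 𝔻 with h(0) = 1 and Re h(z) > 0 on 𝔻, then (1/3)|h'(0)³ − h'''(0)/6| ≤ 2. -/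
open Metric Set Complex Filter

local notation "𝔹" => Metric.ball (0:ℂ) 1

private lemma memB0 : (0:ℂ) ∈ 𝔹 := mem_ball_self one_pos

private lemma derivCongrB {f F : ℂ → ℂ} (hfF : ∀ z ∈ 𝔹, f z = F z) {z : ℂ} (hz : z ∈ 𝔹) :
    deriv f z = deriv F z :=
  Filter.EventuallyEq.deriv_eq (Filter.eventuallyEq_of_mem (Metric.isOpen_ball.mem_nhds hz) hfF)

private lemma abs_lt_abs_of_normSq {z w : ℂ} (h : Complex.normSq z < Complex.normSq w) :
    ‖z‖ < ‖w‖ := by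
  rw [Complex.norm_def, Complex.norm_def]
  exact Real.sqrt_lt_sqrt (Complex.normSq_nonneg _) h

private lemma mobius_pt {c w : ℂ} (hc : ‖c‖ < 1) (hw : ‖w‖ < 1) :
    1 - (starRingEnd ℂ) c * w ≠ 0 ∧
      ‖(w - c) / (1 - (starRingEnd ℂ) c * w)‖ < 1 := by
  have h1 : ‖(starRingEnd ℂ) c * w‖ < 1 := by
    rw [norm_mul, Complex.norm_conj]
    nlinarith [norm_nonneg c, norm_nonneg w]
  have hne : 1 - (starRingEnd ℂ) c * w ≠ 0 := by
    intro h
    have h2 : (starRingEnd ℂ) c * w = 1 := by linear_combination -h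
    rw [h2] at h1
    simp at h1
  refine ⟨hne, ?_⟩
  rw [norm_div, div_lt_one (norm_pos_iff.2 hne)]
  apply abs_lt_abs_of_normSq
  have e1 : Complex.normSq c < 1 := by
    rw [← Complex.sq_norm]; nlinarith [norm_nonneg c]
  have e2 : Complex.normSq w < 1 := by
    rw [← Complex.sq_norm]; nlinarith [norm_nonneg w]
  have key : Complex.normSq (1 - (starRingEnd ℂ) c * w) - Complex.normSq (w - c)
      = (1 - Complex.normSq c) * (1 - Complex.normSq w) := by
    simp only [Complex.normSq_apply, Complex.sub_re, Complex.sub_im, Complex.one_re,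
      Complex.one_im, Complex.mul_re, Complex.mul_im, Complex.conj_re, Complex.conj_im]
    ring
  nlinarith [Complex.normSq_nonneg (w - c)]

private lemma dslope_step (w : ℂ → ℂ) (hw : AnalyticOnNhd ℂ w 𝔹) (hw0 : w 0 = 0)
    (hlt : ∀ z ∈ 𝔹, ‖w z‖ < 1) :
    AnalyticOnNhd ℂ (dslope w 0) 𝔹 ∧ (∀ z ∈ 𝔹, ‖dslope w 0 z‖ ≤ 1) ∧
      deriv w 0 = dslope w 0 0 ∧ deriv (deriv w) 0 = 2 * deriv (dslope w 0) 0 ∧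
      deriv (deriv (deriv w)) 0 = 3 * deriv (deriv (dslope w 0)) 0 := by
  set g := dslope w 0 with hgdef
  have hga : AnalyticOnNhd ℂ g 𝔹 := by
    intro z hz
    rcases eq_or_ne z 0 with rfl | hz0
    · obtain ⟨p, hp⟩ := hw 0 memB0
      exact hp.has_fpower_series_dslope_fslope.analyticAt
    · apply AnalyticAt.congr _ (dslope_eventuallyEq_slope_of_ne w hz0).symm
      have hsl : slope w 0 = fun b => (w b - w 0) / (b - 0) := by
        funext b; rw [slope_def_field]
      rw [hsl]
      exact ((hw z hz).sub analyticAt_const).div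
        ((analyticAt_id.sub analyticAt_const : AnalyticAt ℂ (fun b : ℂ => b - 0) z)) (by simpa using hz0)
  have hgle : ∀ z ∈ 𝔹, ‖g z‖ ≤ 1 := by
    intro z hz
    have hmaps : MapsTo w 𝔹 (ball (w 0) 1) := by
      rw [hw0]; intro x hx; exact mem_ball_zero_iff.2 (hlt x hx)
    have := Complex.norm_dslope_le_div_of_mapsTo_ball hw.differentiableOn (hmaps.mono_right ball_subset_closedBall) hz
    simpa using this
  have hid : ∀ z : ℂ, w z = z * g z := by
    intro z
    have h := sub_smul_dslope w 0 z
    rw [hw0, sub_zero, sub_zero, smul_eq_mul] at h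
    exact h.symm
  have hweq : w = fun z => z * g z := funext hid
  have hga' : AnalyticOnNhd ℂ (deriv g) 𝔹 := hga.deriv
  have hga'' : AnalyticOnNhd ℂ (deriv (deriv g)) 𝔹 := hga'.deriv
  have d1 : deriv w 0 = g 0 := by rw [hgdef, dslope_same]
  have dw_eq : ∀ z ∈ 𝔹, deriv w z = g z + z * deriv g z := by
    intro z hz
    rw [hweq, deriv_fun_mul differentiableAt_fun_id ((hga z hz).differentiableAt)]
    simp
  have d2 : deriv (deriv w) 0 = 2 * deriv g 0 := by
    rw [derivCongrB dw_eq memB0,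
      deriv_fun_add ((hga 0 memB0).differentiableAt)
        (differentiableAt_fun_id.fun_mul ((hga' 0 memB0).differentiableAt)),
      deriv_fun_mul differentiableAt_fun_id ((hga' 0 memB0).differentiableAt)]
    simp
    ring
  have d2w_eq : ∀ z ∈ 𝔹, deriv (deriv w) z = 2 * deriv g z + z * deriv (deriv g) z := by
    intro z hz
    rw [derivCongrB dw_eq hz,
      deriv_fun_add ((hga z hz).differentiableAt)
        (differentiableAt_fun_id.fun_mul ((hga' z hz).differentiableAt)),
      deriv_fun_mul differentiableAt_fun_id ((hga' z hz).differentiableAt)]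
    simp
    ring
  have d3 : deriv (deriv (deriv w)) 0 = 3 * deriv (deriv g) 0 := by
    rw [derivCongrB d2w_eq memB0,
      deriv_fun_add (((hga' 0 memB0).differentiableAt).const_mul 2)
        (differentiableAt_fun_id.fun_mul ((hga'' 0 memB0).differentiableAt)),
      deriv_const_mul 2 ((hga' 0 memB0).differentiableAt),
      deriv_fun_mul differentiableAt_fun_id ((hga'' 0 memB0).differentiableAt)]
    simp
    ring
  exact ⟨hga, hgle, d1, d2, d3⟩

private lemma mobius_step (g ψ : ℂ → ℂ)
    (hψdef : ∀ z, ψ z = (g z - g 0) / (1 - (starRingEnd ℂ) (g 0) * g z))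
    (hg : AnalyticOnNhd ℂ g 𝔹) (hlt : ∀ z ∈ 𝔹, ‖g z‖ < 1) :
    AnalyticOnNhd ℂ ψ 𝔹 ∧ ψ 0 = 0 ∧ (∀ z ∈ 𝔹, ‖ψ z‖ < 1) ∧
      deriv g 0 = (1 - (Complex.normSq (g 0) : ℂ)) * deriv ψ 0 ∧
      deriv (deriv g) 0 = -2 * (starRingEnd ℂ) (g 0) * deriv g 0 * deriv ψ 0
        + (1 - (Complex.normSq (g 0) : ℂ)) * deriv (deriv ψ) 0 := by
  set c := g 0 with hcdef
  have hc : ‖c‖ < 1 := hlt 0 memB0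
  set u := fun z => 1 - (starRingEnd ℂ) c * g z with hudef
  have hne : ∀ z ∈ 𝔹, u z ≠ 0 := fun z hz => (mobius_pt hc (hlt z hz)).1
  have hua : AnalyticOnNhd ℂ u 𝔹 := analyticOnNhd_const.sub (analyticOnNhd_const.mul hg)
  have hψeq : ψ = fun z => (g z - c) / u z := funext hψdef
  have hψa : AnalyticOnNhd ℂ ψ 𝔹 := by
    rw [hψeq]; exact (hg.sub analyticOnNhd_const).div hua hne
  have hψ0 : ψ 0 = 0 := by rw [hψdef]; simp [hcdef]
  have hψlt : ∀ z ∈ 𝔹, ‖ψ z‖ < 1 := by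
    intro z hz
    rw [hψdef]
    exact (mobius_pt hc (hlt z hz)).2
  have hu0 : u 0 = 1 - (Complex.normSq c : ℂ) := by
    simp only [hudef, ← hcdef]
    rw [mul_comm, Complex.mul_conj]
  have hGe : ∀ z ∈ 𝔹, g z = u z * ψ z + c := by
    intro z hz
    rw [hψdef, mul_comm, div_mul_cancel₀ _ (hne z hz)]
    ring
  have hua' : AnalyticOnNhd ℂ (deriv u) 𝔹 := hua.deriv
  have hψa' : AnalyticOnNhd ℂ (deriv ψ) 𝔹 := hψa.deriv
  have duz : ∀ z ∈ 𝔹, deriv u z = -((starRingEnd ℂ) c * deriv g z) := by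
    intro z hz
    have : deriv u z = deriv (fun z => 1 - (starRingEnd ℂ) c * g z) z := rfl
    rw [this, deriv_const_sub, deriv_const_mul _ ((hg z hz).differentiableAt)]
  have d1 : deriv g 0 = (1 - (Complex.normSq c : ℂ)) * deriv ψ 0 := by
    rw [derivCongrB hGe memB0, deriv_add_const,
      deriv_fun_mul ((hua 0 memB0).differentiableAt) ((hψa 0 memB0).differentiableAt), hψ0, hu0]
    ring
  have dgz : ∀ z ∈ 𝔹, deriv g z = deriv u z * ψ z + u z * deriv ψ z := by
    intro z hz
    rw [derivCongrB hGe hz, deriv_add_const,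
      deriv_fun_mul ((hua z hz).differentiableAt) ((hψa z hz).differentiableAt)]
  have d2 : deriv (deriv g) 0 = -2 * (starRingEnd ℂ) c * deriv g 0 * deriv ψ 0
      + (1 - (Complex.normSq c : ℂ)) * deriv (deriv ψ) 0 := by
    rw [derivCongrB dgz memB0,
      deriv_fun_add (((hua' 0 memB0).differentiableAt).fun_mul ((hψa 0 memB0).differentiableAt))
        (((hua 0 memB0).differentiableAt).fun_mul ((hψa' 0 memB0).differentiableAt)),
      deriv_fun_mul ((hua' 0 memB0).differentiableAt) ((hψa 0 memB0).differentiableAt),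
      deriv_fun_mul ((hua 0 memB0).differentiableAt) ((hψa' 0 memB0).differentiableAt),
      hψ0, hu0, duz 0 memB0]
    ring
  exact ⟨hψa, hψ0, hψlt, d1, d2⟩

/-- In the non-strict case the function is constant on the ball. -/
private lemma const_facts (g : ℂ → ℂ) (hg : AnalyticOnNhd ℂ g 𝔹)
    (hle : ∀ z ∈ 𝔹, ‖g z‖ ≤ 1) (hnot : ¬ ∀ z ∈ 𝔹, ‖g z‖ < 1) :
    ‖g 0‖ = 1 ∧ deriv g 0 = 0 ∧ deriv (deriv g) 0 = 0 := by
  push_neg at hnot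
  obtain ⟨z₀, hz₀, h1⟩ := hnot
  have habs : ‖g z₀‖ = 1 := le_antisymm (hle z₀ hz₀) h1
  have hmax : IsMaxOn (norm ∘ g) 𝔹 z₀ := by
    intro z hz
    simp only [Function.comp_apply, habs]
    exact hle z hz
  have heq : Set.EqOn g (Function.const ℂ (g z₀)) 𝔹 :=
    Complex.eqOn_of_isPreconnected_of_isMaxOn_norm (convex_ball _ _).isPreconnected
      isOpen_ball hg.differentiableOn hz₀ hmax
  have h0 : ‖g 0‖ = 1 := by rw [heq memB0]; exact habs
  have h1' : ∀ z ∈ 𝔹, deriv g z = 0 := by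
    intro z hz
    rw [Filter.EventuallyEq.deriv_eq
      (Filter.eventuallyEq_of_mem (isOpen_ball.mem_nhds hz) heq)]
    exact deriv_const _ _
  refine ⟨h0, h1' 0 memB0, ?_⟩
  rw [derivCongrB (F := fun _ => (0:ℂ)) h1' memB0, deriv_const]

private lemma schur_one (g : ℂ → ℂ) (hg : AnalyticOnNhd ℂ g 𝔹)
    (hle : ∀ z ∈ 𝔹, ‖g z‖ ≤ 1) :
    ‖deriv g 0‖ ≤ 1 - ‖g 0‖ ^ 2 := by
  by_cases hs : ∀ z ∈ 𝔹, ‖g z‖ < 1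
  · set ψ : ℂ → ℂ := fun z => (g z - g 0) / (1 - (starRingEnd ℂ) (g 0) * g z) with hψdef
    obtain ⟨hψa, hψ0, hψlt, d1, _⟩ := mobius_step g ψ (fun z => rfl) hg hs
    obtain ⟨hg2a, hg2le, e1, _, _⟩ := dslope_step ψ hψa hψ0 hψlt
    have hb : ‖deriv ψ 0‖ ≤ 1 := by
      rw [e1]; exact hg2le 0 memB0
    have hnsq : Complex.normSq (g 0) ≤ 1 := by
      rw [← Complex.sq_norm]
      nlinarith [hs 0 memB0, norm_nonneg (g 0)]
    calc ‖deriv g 0‖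
        = ‖1 - (Complex.normSq (g 0) : ℂ)‖ * ‖deriv ψ 0‖ := by
          rw [d1, norm_mul]
      _ ≤ (1 - Complex.normSq (g 0)) * 1 := by
          apply mul_le_mul _ hb (norm_nonneg _) (by linarith)
          rw [show (1 : ℂ) - (Complex.normSq (g 0) : ℂ) = ((1 - Complex.normSq (g 0) : ℝ) : ℂ)
            by push_cast; ring, Complex.norm_real, Real.norm_eq_abs, _root_.abs_of_nonneg (by linarith)]
      _ = 1 - ‖g 0‖ ^ 2 := by rw [Complex.sq_norm]; ring
  · obtain ⟨h0, h1, _⟩ := const_facts g hg hle hs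
    rw [h1, h0]
    simp

private lemma schur_two (g : ℂ → ℂ) (hg : AnalyticOnNhd ℂ g 𝔹)
    (hle : ∀ z ∈ 𝔹, ‖g z‖ ≤ 1) :
    ‖deriv (deriv g) 0‖ ≤ 2 * (1 - ‖g 0‖ ^ 2) := by
  by_cases hs : ∀ z ∈ 𝔹, ‖g z‖ < 1
  · set ψ : ℂ → ℂ := fun z => (g z - g 0) / (1 - (starRingEnd ℂ) (g 0) * g z) with hψdef
    obtain ⟨hψa, hψ0, hψlt, d1, d2⟩ := mobius_step g ψ (fun z => rfl) hg hs
    obtain ⟨hg2a, hg2le, e1, e2, _⟩ := dslope_step ψ hψa hψ0 hψlt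
    set g2 := dslope ψ 0
    have hs1 : ‖deriv g2 0‖ ≤ 1 - ‖g2 0‖ ^ 2 :=
      schur_one g2 hg2a hg2le
    set a : ℝ := ‖g 0‖ with hadef
    set b : ℝ := ‖g2 0‖ with hbdef
    have ha1 : a < 1 := hs 0 memB0
    have ha0 : 0 ≤ a := norm_nonneg _
    have hb1 : b ≤ 1 := hg2le 0 memB0
    have hb0 : 0 ≤ b := norm_nonneg _
    have hcast : ‖1 - (Complex.normSq (g 0) : ℂ)‖ = 1 - a ^ 2 := by
      rw [show (1 : ℂ) - (Complex.normSq (g 0) : ℂ) = ((1 - Complex.normSq (g 0) : ℝ) : ℂ)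
        by push_cast; ring, Complex.norm_real, Real.norm_eq_abs, _root_.abs_of_nonneg]
      · rw [← Complex.sq_norm]
      · rw [← Complex.sq_norm]; nlinarith
    have key : ‖deriv (deriv g) 0‖
        ≤ 2 * a * ((1 - a ^ 2) * b * b) + (1 - a ^ 2) * (2 * (1 - b ^ 2)) := by
      rw [d2]
      calc ‖-2 * (starRingEnd ℂ) (g 0) * deriv g 0 * deriv ψ 0
            + (1 - (Complex.normSq (g 0) : ℂ)) * deriv (deriv ψ) 0‖
          ≤ ‖-2 * (starRingEnd ℂ) (g 0) * deriv g 0 * deriv ψ 0‖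
            + ‖(1 - (Complex.normSq (g 0) : ℂ)) * deriv (deriv ψ) 0‖ :=
            norm_add_le _ _
        _ = 2 * a * (‖deriv g 0‖ * ‖deriv ψ 0‖)
            + (1 - a ^ 2) * ‖deriv (deriv ψ) 0‖ := by
            rw [norm_mul, norm_mul, norm_mul, norm_mul, hcast, Complex.norm_conj]
            simp [hadef]
            ring
        _ ≤ 2 * a * ((1 - a ^ 2) * b * b) + (1 - a ^ 2) * (2 * (1 - b ^ 2)) := by
            have hdg : ‖deriv g 0‖ = (1 - a ^ 2) * b := by
              rw [d1, norm_mul, hcast, e1, ← hbdef]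
            have hdψ : ‖deriv ψ 0‖ = b := by rw [e1]
            have hddψ : ‖deriv (deriv ψ) 0‖ ≤ 2 * (1 - b ^ 2) := by
              rw [e2, norm_mul]
              simp only [Complex.norm_ofNat]
              nlinarith [hs1]
            rw [hdg, hdψ]
            have h1a : (0:ℝ) ≤ 1 - a ^ 2 := by nlinarith
            nlinarith
    have hfac : (0:ℝ) ≤ (1 - a ^ 2) * (b * b) * (1 - a) :=
      mul_nonneg (mul_nonneg (by nlinarith) (mul_nonneg hb0 hb0)) (by linarith)
    nlinarith [key, hfac]
  · obtain ⟨h0, _, h2⟩ := const_facts g hg hle hs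
    rw [h2, h0]
    simp

private lemma schur_bounds (w : ℂ → ℂ) (hw : AnalyticOnNhd ℂ w 𝔹) (hw0 : w 0 = 0)
    (hlt : ∀ z ∈ 𝔹, ‖w z‖ < 1) :
    ‖deriv w 0‖ ≤ 1 ∧
      ‖deriv (deriv w) 0‖ ≤ 2 * (1 - ‖deriv w 0‖ ^ 2) ∧
      ‖deriv (deriv (deriv w)) 0‖ ≤ 6 * (1 - ‖deriv w 0‖ ^ 2) := by
  obtain ⟨hga, hgle, e1, e2, e3⟩ := dslope_step w hw hw0 hlt
  set g := dslope w 0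
  have h1 : ‖deriv w 0‖ ≤ 1 := by rw [e1]; exact hgle 0 memB0
  have hg1 : ‖deriv g 0‖ ≤ 1 - ‖g 0‖ ^ 2 := schur_one g hga hgle
  have hg2 : ‖deriv (deriv g) 0‖ ≤ 2 * (1 - ‖g 0‖ ^ 2) :=
    schur_two g hga hgle
  have ha : ‖deriv w 0‖ = ‖g 0‖ := by rw [e1]
  refine ⟨h1, ?_, ?_⟩
  · rw [e2, norm_mul, ha]
    simp only [Complex.norm_ofNat]
    nlinarith
  · rw [e3, norm_mul, ha]
    simp only [Complex.norm_ofNat]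
    nlinarith

/-- If `h` is analytic on the unit disk, `h 0 = 1` and `Re h > 0` there, then
`(1/3)|h'(0)³ − h'''(0)/6| ≤ 2`. -/
theorem third_deriv_functional_bound (h : ℂ → ℂ)
    (hh : AnalyticOnNhd ℂ h (Metric.ball 0 1))
    (hh0 : h 0 = 1)
    (hre : ∀ z ∈ Metric.ball (0 : ℂ) 1, 0 < (h z).re) :
    (1 / 3 : ℝ) * ‖(deriv h 0) ^ 3 - iteratedDeriv 3 h 0 / 6‖ ≤ 2 := by
  set u : ℂ → ℂ := fun z => h z + 1 with hudef
  have hden : ∀ z ∈ 𝔹, u z ≠ 0 := by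
    intro z hz hzero
    have : (u z).re = 0 := by rw [hzero]; simp
    simp only [hudef, Complex.add_re, Complex.one_re] at this
    have := hre z hz
    linarith
  set ω : ℂ → ℂ := fun z => (h z - 1) / u z with hωdef
  have hωa : AnalyticOnNhd ℂ ω 𝔹 :=
    (hh.sub analyticOnNhd_const).div (hh.add analyticOnNhd_const) hden
  have hω0 : ω 0 = 0 := by simp [hωdef, hh0]
  have hωlt : ∀ z ∈ 𝔹, ‖ω z‖ < 1 := by
    intro z hz
    rw [hωdef]
    simp only
    rw [norm_div, div_lt_one (norm_pos_iff.2 (hden z hz))]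
    apply abs_lt_abs_of_normSq
    have := hre z hz
    simp only [hudef, Complex.normSq_apply, Complex.sub_re, Complex.sub_im, Complex.add_re,
      Complex.add_im, Complex.one_re, Complex.one_im]
    nlinarith
  obtain ⟨hb1, hb2, hb3⟩ := schur_bounds ω hωa hω0 hωlt
  set A1 := deriv ω 0
  set A2 := deriv (deriv ω) 0
  set A3 := deriv (deriv (deriv ω)) 0
  -- analyticity of all players
  have hua : AnalyticOnNhd ℂ u 𝔹 := hh.add analyticOnNhd_const
  have hha' : AnalyticOnNhd ℂ (deriv h) 𝔹 := hh.deriv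
  have hha'' : AnalyticOnNhd ℂ (deriv (deriv h)) 𝔹 := hha'.deriv
  have hωa' : AnalyticOnNhd ℂ (deriv ω) 𝔹 := hωa.deriv
  have hωa'' : AnalyticOnNhd ℂ (deriv (deriv ω)) 𝔹 := hωa'.deriv
  have hu0 : u 0 = 2 := by simp [hudef, hh0]; ring
  have hNe : ∀ z ∈ 𝔹, h z - 1 = u z * ω z := by
    intro z hz
    rw [hωdef]
    simp only
    rw [mul_comm, div_mul_cancel₀ _ (hden z hz)]
  have duz : ∀ z ∈ 𝔹, deriv u z = deriv h z := by
    intro z hz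
    rw [hudef]
    exact deriv_add_const 1
  have hd1 : deriv h 0 = 2 * A1 := by
    have e := derivCongrB hNe memB0
    rw [deriv_sub_const] at e
    rw [e, deriv_fun_mul ((hua 0 memB0).differentiableAt) ((hωa 0 memB0).differentiableAt),
      hω0, hu0]
    ring
  have hDh : ∀ z ∈ 𝔹, deriv h z = deriv h z * ω z + u z * deriv ω z := by
    intro z hz
    have e := derivCongrB hNe hz
    rw [deriv_sub_const,
      deriv_fun_mul ((hua z hz).differentiableAt) ((hωa z hz).differentiableAt),
      duz z hz] at e
    exact e
  have hd2 : deriv (deriv h) 0 = 2 * deriv h 0 * A1 + 2 * A2 := by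
    rw [derivCongrB hDh memB0,
      deriv_fun_add (((hha' 0 memB0).differentiableAt).fun_mul ((hωa 0 memB0).differentiableAt))
        (((hua 0 memB0).differentiableAt).fun_mul ((hωa' 0 memB0).differentiableAt)),
      deriv_fun_mul ((hha' 0 memB0).differentiableAt) ((hωa 0 memB0).differentiableAt),
      deriv_fun_mul ((hua 0 memB0).differentiableAt) ((hωa' 0 memB0).differentiableAt),
      hω0, hu0, duz 0 memB0]
    ring
  have hDDh : ∀ z ∈ 𝔹, deriv (deriv h) z
      = deriv (deriv h) z * ω z + 2 * (deriv h z * deriv ω z) + u z * deriv (deriv ω) z := by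
    intro z hz
    have e := derivCongrB hDh hz
    rw [deriv_fun_add (((hha' z hz).differentiableAt).fun_mul ((hωa z hz).differentiableAt))
        (((hua z hz).differentiableAt).fun_mul ((hωa' z hz).differentiableAt)),
      deriv_fun_mul ((hha' z hz).differentiableAt) ((hωa z hz).differentiableAt),
      deriv_fun_mul ((hua z hz).differentiableAt) ((hωa' z hz).differentiableAt),
      duz z hz] at e
    linear_combination e
  have hd3 : deriv (deriv (deriv h)) 0
      = 3 * deriv (deriv h) 0 * A1 + 3 * deriv h 0 * A2 + 2 * A3 := by
    rw [derivCongrB hDDh memB0,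
      deriv_fun_add
        ((((hha'' 0 memB0).differentiableAt).fun_mul ((hωa 0 memB0).differentiableAt)).fun_add
          ((((hha' 0 memB0).differentiableAt).fun_mul
            ((hωa' 0 memB0).differentiableAt)).const_mul 2))
        (((hua 0 memB0).differentiableAt).fun_mul ((hωa'' 0 memB0).differentiableAt)),
      deriv_fun_add (((hha'' 0 memB0).differentiableAt).fun_mul ((hωa 0 memB0).differentiableAt))
        ((((hha' 0 memB0).differentiableAt).fun_mul
          ((hωa' 0 memB0).differentiableAt)).const_mul 2),
      deriv_fun_mul ((hha'' 0 memB0).differentiableAt) ((hωa 0 memB0).differentiableAt),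
      deriv_const_mul 2 (((hha' 0 memB0).differentiableAt).fun_mul
        ((hωa' 0 memB0).differentiableAt)),
      deriv_fun_mul ((hha' 0 memB0).differentiableAt) ((hωa' 0 memB0).differentiableAt),
      deriv_fun_mul ((hua 0 memB0).differentiableAt) ((hωa'' 0 memB0).differentiableAt),
      hω0, hu0, duz 0 memB0]
    ring
  have hiter : iteratedDeriv 3 h 0 = deriv (deriv (deriv h)) 0 := by
    simp [iteratedDeriv_succ, iteratedDeriv_zero]
  have hexpr : (deriv h 0) ^ 3 - iteratedDeriv 3 h 0 / 6
      = 6 * A1 ^ 3 - 2 * (A1 * A2) - A3 / 3 := by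
    rw [hiter, hd3, hd2, hd1]
    ring
  set r := ‖A1‖ with hrdef
  set s := ‖A2‖
  set t := ‖A3‖
  have hr0 : 0 ≤ r := norm_nonneg _
  have hs0 : 0 ≤ s := norm_nonneg _
  have ht0 : 0 ≤ t := norm_nonneg _
  have htri : ‖(deriv h 0) ^ 3 - iteratedDeriv 3 h 0 / 6‖
      ≤ 6 * r ^ 3 + 2 * (r * s) + t / 3 := by
    rw [hexpr]
    calc ‖6 * A1 ^ 3 - 2 * (A1 * A2) - A3 / 3‖
        ≤ ‖6 * A1 ^ 3 - 2 * (A1 * A2)‖ + ‖A3 / 3‖ := by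
          exact norm_sub_le _ _
      _ ≤ ‖6 * A1 ^ 3‖ + ‖2 * (A1 * A2)‖ + ‖A3 / 3‖ := by
          have := norm_sub_le (6 * A1 ^ 3) (2 * (A1 * A2))
          linarith
      _ = 6 * r ^ 3 + 2 * (r * s) + t / 3 := by
          rw [norm_mul, norm_pow, norm_mul, norm_mul, norm_div]
          norm_num
          rfl
  have h6 : 6 * r ^ 3 + 2 * (r * s) + t / 3 ≤ 6 := by
    nlinarith [mul_nonneg (sub_nonneg.2 hb1) (by positivity : (0:ℝ) ≤ r ^ 2 + 2),
      mul_le_mul_of_nonneg_left hb2 hr0, mul_nonneg hr0 hs0]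
  have := htri.trans h6
  linarith [norm_nonneg ((deriv h 0) ^ 3 - iteratedDeriv 3 h 0 / 6)]
end

section
/- If f(z) = z + a₂z² + a₃z³ + a₄z⁴ + ⋯ is a starlike function on the unit disk (i.e., f is analytic and univalent with f(0)=0, f'(0)=1, and Re(z f'(z)/f(z)) > 0 for 0 < |z| < 1), then |a₂a₃ − a₄| ≤ 2, and the bound is attained by the Koebe function f(z) = z/(1−z)². -/
open Metric Set Function Filter Complex
noncomputable section

/-- Taylor coefficient at 0. -/
def tc (n : ℕ) (g : ℂ → ℂ) : ℂ := iteratedDeriv n g 0 / (Nat.factorial n : ℂ)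

lemma tc_eq_coeff {g : ℂ → ℂ} {q : FormalMultilinearSeries ℂ ℂ ℂ}
    (h : HasFPowerSeriesAt g q 0) (n : ℕ) : tc n g = q.coeff n := by
  obtain ⟨r, hr⟩ := h
  have h1 := hr.factorial_smul (1 : ℂ) n
  rw [FormalMultilinearSeries.apply_eq_pow_smul_coeff, one_pow, one_smul] at h1
  have h2 : iteratedDeriv n g 0 = (n.factorial : ℂ) * q.coeff n := by
    rw [iteratedDeriv_eq_iteratedFDeriv, ← h1, nsmul_eq_mul]
  rw [tc, h2, mul_comm, mul_div_assoc]
  rw [div_self (by exact_mod_cast n.factorial_ne_zero), mul_one]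

lemma tc_dslope {g : ℂ → ℂ} (h : AnalyticAt ℂ g 0) (n : ℕ) :
    tc n (dslope g 0) = tc (n + 1) g := by
  obtain ⟨q, hq⟩ := h
  rw [tc_eq_coeff hq.has_fpower_series_dslope_fslope n, tc_eq_coeff hq (n+1),
    FormalMultilinearSeries.coeff_fslope]

lemma tc_zero (g : ℂ → ℂ) : tc 0 g = g 0 := by simp [tc]
lemma tc_one (g : ℂ → ℂ) : tc 1 g = deriv g 0 := by simp [tc]

/-- dslope of an analytic function on the unit ball is analytic there. -/
lemma analyticOnNhd_dslope {g : ℂ → ℂ} (h : AnalyticOnNhd ℂ g (ball 0 1)) :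
    AnalyticOnNhd ℂ (dslope g 0) (ball 0 1) := by
  intro z hz
  rcases eq_or_ne z 0 with rfl | hz0
  · obtain ⟨q, hq⟩ := h 0 (by simp)
    exact hq.has_fpower_series_dslope_fslope.analyticAt
  · have h1 : AnalyticAt ℂ (fun w => (w - 0)⁻¹ • (g w - g 0)) z := by
      apply AnalyticAt.fun_smul
      · exact ((analyticAt_id.sub analyticAt_const).inv (by simpa using hz0))
      · exact (h z hz).sub analyticAt_const
    apply h1.congr
    filter_upwards [isOpen_ne.mem_nhds (show z ∈ {w : ℂ | w ≠ 0} from hz0)] with w hw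
    rw [dslope_of_ne _ hw]
    rfl

/-- Schwarz: bound on dslope for self-maps of the disk fixing 0 (closed-ball target). -/
lemma schwarz' {g : ℂ → ℂ} (h : AnalyticOnNhd ℂ g (ball 0 1)) (h0 : g 0 = 0)
    (hb : ∀ z ∈ ball (0:ℂ) 1, ‖g z‖ ≤ 1) {z : ℂ} (hz : z ∈ ball (0:ℂ) 1) :
    ‖dslope g 0 z‖ ≤ 1 := by
  have hd : DifferentiableOn ℂ g (ball 0 1) := h.differentiableOn
  have key : ∀ ε : ℝ, 0 < ε → ‖dslope g 0 z‖ ≤ 1 + ε := by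
    intro ε hε
    have hm : MapsTo g (ball (0:ℂ) 1) (ball (g 0) (1 + ε)) := by
      intro w hw
      rw [h0, mem_ball, dist_zero_right]
      exact lt_of_le_of_lt (hb w hw) (by linarith)
    simpa using Complex.norm_dslope_le_div_of_mapsTo_ball hd (hm.mono_right ball_subset_closedBall) hz
  by_contra hc
  push_neg at hc
  have := key ((‖dslope g 0 z‖ - 1) / 2) (by linarith)
  linarith


variable {u v : ℂ → ℂ} {s : Set ℂ}

lemma deriv_congr_of_eqOn {g h : ℂ → ℂ} (he : EqOn g h s) (hs : IsOpen s) {x : ℂ}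
    (hx : x ∈ s) : deriv g x = deriv h x :=
  Filter.EventuallyEq.deriv_eq (by filter_upwards [hs.mem_nhds hx] using he)

lemma eqOn_deriv_mul (hu : AnalyticOnNhd ℂ u s) (hv : AnalyticOnNhd ℂ v s) :
    EqOn (deriv (fun z => u z * v z))
      (fun z => deriv u z * v z + u z * deriv v z) s := by
  intro z hz
  exact deriv_mul (hu z hz).differentiableAt (hv z hz).differentiableAt

lemma analyticOnNhd_iteratedDeriv_two (hu : AnalyticOnNhd ℂ u s) :
    AnalyticOnNhd ℂ (iteratedDeriv 2 u) s := by
  intro z hz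
  exact (hu.deriv.deriv z hz).congr (by
    filter_upwards with w
    rw [iteratedDeriv_succ, iteratedDeriv_one])

/-- second-order Leibniz at a point of an open set -/
lemma iteratedDeriv_two_mul (hu : AnalyticOnNhd ℂ u s) (hv : AnalyticOnNhd ℂ v s)
    (hs : IsOpen s) {x : ℂ} (hx : x ∈ s) :
    iteratedDeriv 2 (fun z => u z * v z) x =
      iteratedDeriv 2 u x * v x + 2 * deriv u x * deriv v x + u x * iteratedDeriv 2 v x := by
  have h0 : iteratedDeriv 2 (fun z => u z * v z) x
      = deriv (deriv (fun z => u z * v z)) x := by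
    rw [iteratedDeriv_succ, iteratedDeriv_one]
  have h1 : deriv (deriv (fun z => u z * v z)) x
      = deriv (fun z => deriv u z * v z + u z * deriv v z) x :=
    deriv_congr_of_eqOn (eqOn_deriv_mul hu hv) hs hx
  have hu' := hu.deriv; have hv' := hv.deriv
  have H : HasDerivAt (fun z => deriv u z * v z + u z * deriv v z)
      ((deriv (deriv u) x * v x + deriv u x * deriv v x)
        + (deriv u x * deriv v x + u x * deriv (deriv v) x)) x := by
    exact (((hu' x hx).differentiableAt.hasDerivAt.mul
        (hv x hx).differentiableAt.hasDerivAt).add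
      ((hu x hx).differentiableAt.hasDerivAt.mul
        (hv' x hx).differentiableAt.hasDerivAt))
  rw [h0, h1, H.deriv,
    show iteratedDeriv 2 u x = deriv (deriv u) x by rw [iteratedDeriv_succ, iteratedDeriv_one],
    show iteratedDeriv 2 v x = deriv (deriv v) x by rw [iteratedDeriv_succ, iteratedDeriv_one]]
  ring

/-- third-order Leibniz at a point of an open set -/
lemma iteratedDeriv_three_mul (hu : AnalyticOnNhd ℂ u s) (hv : AnalyticOnNhd ℂ v s)
    (hs : IsOpen s) {x : ℂ} (hx : x ∈ s) :
    iteratedDeriv 3 (fun z => u z * v z) x =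
      iteratedDeriv 3 u x * v x + 3 * iteratedDeriv 2 u x * deriv v x
      + 3 * deriv u x * iteratedDeriv 2 v x + u x * iteratedDeriv 3 v x := by
  have h2 : EqOn (iteratedDeriv 2 (fun z => u z * v z))
      (fun z => iteratedDeriv 2 u z * v z + 2 * deriv u z * deriv v z
        + u z * iteratedDeriv 2 v z) s :=
    fun z hz => iteratedDeriv_two_mul hu hv hs hz
  have h3 : iteratedDeriv 3 (fun z => u z * v z) x
      = deriv (fun z => iteratedDeriv 2 u z * v z + 2 * deriv u z * deriv v z
        + u z * iteratedDeriv 2 v z) x := by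
    rw [iteratedDeriv_succ]
    exact deriv_congr_of_eqOn h2 hs hx
  have hu' := hu.deriv; have hv' := hv.deriv
  have hu'' := analyticOnNhd_iteratedDeriv_two hu
  have hv'' := analyticOnNhd_iteratedDeriv_two hv
  have H : HasDerivAt (fun z => iteratedDeriv 2 u z * v z + 2 * deriv u z * deriv v z
        + u z * iteratedDeriv 2 v z)
      (((deriv (iteratedDeriv 2 u) x * v x + iteratedDeriv 2 u x * deriv v x)
        + (2 * deriv (deriv u) x * deriv v x + 2 * deriv u x * deriv (deriv v) x))
        + (deriv u x * iteratedDeriv 2 v x + u x * deriv (iteratedDeriv 2 v) x)) x := by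
    refine HasDerivAt.add (HasDerivAt.add ?_ ?_) ?_
    · exact (hu'' x hx).differentiableAt.hasDerivAt.mul
        (hv x hx).differentiableAt.hasDerivAt
    · have := ((hu' x hx).differentiableAt.hasDerivAt.mul
        (hv' x hx).differentiableAt.hasDerivAt).const_mul (2:ℂ)
      simpa [mul_assoc, mul_add] using this
    · exact (hu x hx).differentiableAt.hasDerivAt.mul
        (hv'' x hx).differentiableAt.hasDerivAt
  rw [h3, H.deriv]
  have e1 : deriv (iteratedDeriv 2 u) x = iteratedDeriv 3 u x := by rw [← iteratedDeriv_succ]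
  have e2 : deriv (iteratedDeriv 2 v) x = iteratedDeriv 3 v x := by rw [← iteratedDeriv_succ]
  have e3 : deriv (deriv u) x = iteratedDeriv 2 u x := by
    rw [iteratedDeriv_succ, iteratedDeriv_one]
  have e4 : deriv (deriv v) x = iteratedDeriv 2 v x := by
    rw [iteratedDeriv_succ, iteratedDeriv_one]
  rw [e1, e2, e3, e4]
  ring

end

lemma iteratedDeriv_add_const (n : ℕ) (q : ℂ → ℂ) (c : ℂ) (x : ℂ) :
    iteratedDeriv (n+1) (fun z => q z + c) x = iteratedDeriv (n+1) q x := by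
  rw [iteratedDeriv_succ', iteratedDeriv_succ']
  congr 1
  funext z
  rw [deriv_add_const]

/-- max modulus: if `‖φ‖ ≤ 1 = |φ 0|` on the ball then the first two derivatives vanish. -/
lemma maxmod_consts {φ : ℂ → ℂ} (hφ : AnalyticOnNhd ℂ φ (ball 0 1))
    (hb : ∀ z ∈ ball (0:ℂ) 1, ‖φ z‖ ≤ 1) (h1 : ‖(φ 0)‖ = 1) :
    deriv φ 0 = 0 ∧ iteratedDeriv 2 φ 0 = 0 := by
  have hmax : IsMaxOn (norm ∘ φ) (ball (0:ℂ) 1) 0 := by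
    intro z hz
    simp only [comp_apply]
    rw [show ‖(φ 0)‖ = 1 from h1]
    exact hb z hz
  have heq : EqOn φ (const ℂ (φ 0)) (ball (0:ℂ) 1) :=
    Complex.eqOn_of_isPreconnected_of_isMaxOn_norm (convex_ball _ _).isPreconnected
      isOpen_ball hφ.differentiableOn (by simp) hmax
  have hc : const ℂ (φ 0) = fun _ : ℂ => φ 0 := rfl
  constructor
  · rw [deriv_congr_of_eqOn heq isOpen_ball (by simp : (0:ℂ) ∈ ball (0:ℂ) 1), hc]
    simp
  · rw [heq.iteratedDeriv_of_isOpen isOpen_ball 2 (by simp : (0:ℂ) ∈ ball (0:ℂ) 1), hc]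
    simp [iteratedDeriv_succ]

lemma one_sub_mul_ne_zero {b w : ℂ} (hb : ‖b‖ < 1) (hw : ‖w‖ ≤ 1) :
    1 - (starRingEnd ℂ) b * w ≠ 0 := by
  intro h
  have h2 : ‖((starRingEnd ℂ) b * w)‖ < 1 := by
    rw [norm_mul, Complex.norm_conj]
    calc ‖b‖ * ‖w‖ ≤ ‖b‖ * 1 :=
      mul_le_mul_of_nonneg_left (by simpa using hw) (norm_nonneg b)
    _ < 1 := by simpa using hb
  rw [sub_eq_zero] at h
  rw [← h] at h2
  simp at h2

/-- The Schur step. -/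
lemma schur_step {φ : ℂ → ℂ} (hφ : AnalyticOnNhd ℂ φ (ball 0 1))
    (hb : ∀ z ∈ ball (0:ℂ) 1, ‖φ z‖ ≤ 1) (hlt : ‖(φ 0)‖ < 1) :
    ∃ φ1 : ℂ → ℂ, AnalyticOnNhd ℂ φ1 (ball 0 1) ∧ φ1 0 = 0 ∧
      (∀ z ∈ ball (0:ℂ) 1, ‖φ1 z‖ ≤ 1) ∧
      deriv φ 0 = ((1 - ‖(φ 0)‖^2 : ℝ) : ℂ) * deriv φ1 0 ∧
      iteratedDeriv 2 φ 0 = 2 * ((1 - ‖(φ 0)‖^2 : ℝ) : ℂ) * (iteratedDeriv 2 φ1 0 / 2)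
        - 2 * (starRingEnd ℂ) (φ 0) * ((1 - ‖(φ 0)‖^2 : ℝ) : ℂ) * (deriv φ1 0)^2 := by
  set b := φ 0 with hbdef
  set k := (starRingEnd ℂ) b with hkdef
  set d : ℂ → ℂ := fun z => 1 - k * φ z with hddef
  have h0B : (0:ℂ) ∈ ball (0:ℂ) 1 := by simp
  have hdne : ∀ z ∈ ball (0:ℂ) 1, d z ≠ 0 := fun z hz =>
    one_sub_mul_ne_zero hlt (hb z hz)
  have hdan : AnalyticOnNhd ℂ d (ball 0 1) := fun z hz =>
    analyticAt_const.sub (analyticAt_const.mul (hφ z hz))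
  set φ1 : ℂ → ℂ := fun z => (φ z - b) / d z with hφ1def
  have hφ1an : AnalyticOnNhd ℂ φ1 (ball 0 1) := fun z hz =>
    ((hφ z hz).sub analyticAt_const).div (hdan z hz) (hdne z hz)
  have hφ10 : φ1 0 = 0 := by simp [hφ1def, hbdef]
  have hkb : k * b = ((‖b‖ ^ 2 : ℝ) : ℂ) := by
    rw [hkdef, mul_comm, Complex.mul_conj]
    norm_cast
    exact (Complex.sq_norm b).symm
  have hd0 : d 0 = ((1 - ‖b‖ ^ 2 : ℝ) : ℂ) := by
    show (1 : ℂ) - k * φ 0 = _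
    rw [← hbdef, hkb]
    push_cast
    ring
  have hepos : (0:ℝ) < 1 - ‖b‖ ^ 2 := by nlinarith [norm_nonneg b]
  -- boundedness
  have hφ1b : ∀ z ∈ ball (0:ℂ) 1, ‖φ1 z‖ ≤ 1 := by
    intro z hz
    have ha : ‖(φ z)‖ ≤ 1 := by simpa using hb z hz
    have key : Complex.normSq (1 - k * φ z) - Complex.normSq (φ z - b)
        = (1 - Complex.normSq (φ z)) * (1 - Complex.normSq b) := by
      simp only [hkdef, Complex.normSq_apply, Complex.sub_re, Complex.sub_im,
        Complex.mul_re, Complex.mul_im, Complex.one_re, Complex.one_im,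
        Complex.conj_re, Complex.conj_im]
      ring
    have h1 : Complex.normSq (φ z) ≤ 1 := by
      rw [← Complex.sq_norm]; nlinarith [norm_nonneg (φ z)]
    have h2 : Complex.normSq b ≤ 1 := by
      rw [← Complex.sq_norm]; nlinarith [norm_nonneg b]
    have hge : Complex.normSq (φ z - b) ≤ Complex.normSq (1 - k * φ z) := by
      nlinarith [Complex.normSq_nonneg (φ z - b), Complex.normSq_nonneg (1 - k * φ z)]
    have := hdne z hz
    rw [hφ1def]
    simp only [norm_div]
    rw [div_le_one (norm_pos_iff.mpr (hdne z hz))]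
    have e1 : ‖(φ z - b)‖ = Real.sqrt (Complex.normSq (φ z - b)) :=
      Complex.norm_def _
    have e2 : ‖(d z)‖ = Real.sqrt (Complex.normSq (d z)) :=
      Complex.norm_def _
    rw [e1, e2]
    exact Real.sqrt_le_sqrt (by simpa [hddef] using hge)
  -- product identity
  have hprod : EqOn (fun z => φ1 z * d z) (fun z => φ z - b) (ball (0:ℂ) 1) := by
    intro z hz
    simp only [hφ1def]
    exact div_mul_cancel₀ _ (hdne z hz)
  -- first derivative
  have hder1 : deriv (fun z => φ1 z * d z) 0 = deriv (fun z => φ z - b) 0 :=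
    deriv_congr_of_eqOn hprod isOpen_ball h0B
  have hLHS1 : deriv (fun z => φ1 z * d z) 0 = deriv φ1 0 * d 0 := by
    rw [deriv_fun_mul (hφ1an 0 h0B).differentiableAt (hdan 0 h0B).differentiableAt, hφ10]
    ring
  have hRHS1 : deriv (fun z => φ z - b) 0 = deriv φ 0 := by
    simp [deriv_sub_const]
  have hA4 : deriv φ 0 = ((1 - ‖b‖ ^ 2 : ℝ) : ℂ) * deriv φ1 0 := by
    rw [← hRHS1, ← hder1, hLHS1, hd0]; ring
  -- derivative of d at 0
  have hdd : deriv d 0 = - (k * deriv φ 0) := by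
    rw [hddef]
    have : (fun z => 1 - k * φ z) = fun z => (1:ℂ) - (fun w => k * φ w) z := rfl
    rw [this, deriv_const_sub, deriv_const_mul _ (hφ 0 h0B).differentiableAt]
  -- second derivative
  have hder2 : iteratedDeriv 2 (fun z => φ1 z * d z) 0
      = iteratedDeriv 2 (fun z => φ z - b) 0 :=
    hprod.iteratedDeriv_of_isOpen isOpen_ball 2 h0B
  have hRHS2 : iteratedDeriv 2 (fun z => φ z - b) 0 = iteratedDeriv 2 φ 0 := by
    have h' : (fun z => φ z - b) = fun z => φ z + (-b) := by funext z; ring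
    rw [h']
    exact iteratedDeriv_add_const 1 φ (-b) 0
  have hLHS2 : iteratedDeriv 2 (fun z => φ1 z * d z) 0
      = iteratedDeriv 2 φ1 0 * d 0 + 2 * deriv φ1 0 * deriv d 0 := by
    rw [iteratedDeriv_two_mul hφ1an hdan isOpen_ball h0B, hφ10]
    ring
  refine ⟨φ1, hφ1an, hφ10, hφ1b, hA4, ?_⟩
  rw [← hRHS2, ← hder2, hLHS2, hd0, hdd, hA4]
  ring

/-- Schwarz–Pick at the origin (coefficient 1). -/
lemma SP1 {φ : ℂ → ℂ} (hφ : AnalyticOnNhd ℂ φ (ball 0 1))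
    (hb : ∀ z ∈ ball (0:ℂ) 1, ‖φ z‖ ≤ 1) :
    ‖(deriv φ 0)‖ ≤ 1 - ‖(φ 0)‖^2 := by
  have h0B : (0:ℂ) ∈ ball (0:ℂ) 1 := by simp
  have hle : ‖(φ 0)‖ ≤ 1 := by simpa using hb 0 h0B
  rcases lt_or_eq_of_le hle with hlt | heq
  · obtain ⟨φ1, han, h10, h1b, hA4, -⟩ := schur_step hφ hb hlt
    have hv1 : ‖(deriv φ1 0)‖ ≤ 1 := by
      have := schwarz' han h10 h1b h0B
      rwa [dslope_same] at this
    rw [hA4, norm_mul]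
    have h2 : ‖(((1 - ‖(φ 0)‖^2 : ℝ) : ℂ))‖ = 1 - ‖(φ 0)‖^2 := by
      rw [Complex.norm_real, Real.norm_eq_abs, _root_.abs_of_nonneg]
      nlinarith [norm_nonneg (φ 0)]
    rw [h2]
    have h3 : 0 ≤ 1 - ‖(φ 0)‖^2 := by nlinarith [norm_nonneg (φ 0)]
    nlinarith [mul_le_mul_of_nonneg_left hv1 h3]
  · rw [(maxmod_consts hφ hb heq).1, norm_zero, heq]
    norm_num

/-- Schwarz lemma, first two coefficients. -/
lemma schwarz_two {ψ : ℂ → ℂ} (hψ : AnalyticOnNhd ℂ ψ (ball 0 1)) (h0 : ψ 0 = 0)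
    (hb : ∀ z ∈ ball (0:ℂ) 1, ‖ψ z‖ ≤ 1) :
    ‖(deriv ψ 0)‖ ≤ 1 ∧
    ‖(iteratedDeriv 2 ψ 0 / 2)‖ ≤ 1 - ‖(deriv ψ 0)‖^2 := by
  have h0B : (0:ℂ) ∈ ball (0:ℂ) 1 := by simp
  set φ := dslope ψ 0 with hφdef
  have hφan : AnalyticOnNhd ℂ φ (ball 0 1) := analyticOnNhd_dslope hψ
  have hφb : ∀ z ∈ ball (0:ℂ) 1, ‖φ z‖ ≤ 1 := fun z hz => schwarz' hψ h0 hb hz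
  have hφ0 : φ 0 = deriv ψ 0 := dslope_same ψ 0
  constructor
  · have := hφb 0 h0B
    rwa [hφ0] at this
  · have h1 : iteratedDeriv 2 ψ 0 / 2 = deriv φ 0 := by
      have h := tc_dslope (hψ 0 h0B) 1
      rw [tc_one] at h
      rw [hφdef, h, tc]
      norm_num
    rw [h1, ← hφ0]
    exact SP1 hφan hφb

/-- Schwarz lemma, first three coefficients. -/
lemma schwarz_three {ψ : ℂ → ℂ} (hψ : AnalyticOnNhd ℂ ψ (ball 0 1)) (h0 : ψ 0 = 0)
    (hb : ∀ z ∈ ball (0:ℂ) 1, ‖ψ z‖ ≤ 1) :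
    ‖(deriv ψ 0)‖ ≤ 1 ∧
    ‖(iteratedDeriv 2 ψ 0 / 2)‖ ≤ 1 - ‖(deriv ψ 0)‖^2 ∧
    ‖(iteratedDeriv 3 ψ 0 / 6)‖ * (1 + ‖(deriv ψ 0)‖) ≤
      (1 - ‖(deriv ψ 0)‖^2) * (1 + ‖(deriv ψ 0)‖)
        - ‖(iteratedDeriv 2 ψ 0 / 2)‖^2 := by
  have h0B : (0:ℂ) ∈ ball (0:ℂ) 1 := by simp
  obtain ⟨ht1, hs1⟩ := schwarz_two hψ h0 hb
  refine ⟨ht1, hs1, ?_⟩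
  set φ := dslope ψ 0 with hφdef
  have hφan : AnalyticOnNhd ℂ φ (ball 0 1) := analyticOnNhd_dslope hψ
  have hφb : ∀ z ∈ ball (0:ℂ) 1, ‖φ z‖ ≤ 1 := fun z hz => schwarz' hψ h0 hb hz
  have hφ0 : φ 0 = deriv ψ 0 := dslope_same ψ 0
  have hw2 : iteratedDeriv 2 ψ 0 / 2 = deriv φ 0 := by
    have h := tc_dslope (hψ 0 h0B) 1
    rw [tc_one] at h
    rw [hφdef, h, tc]; norm_num
  have hw3 : iteratedDeriv 3 ψ 0 / 6 = iteratedDeriv 2 φ 0 / 2 := by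
    have h := tc_dslope (hψ 0 h0B) 2
    rw [tc, tc] at h
    norm_num [Nat.factorial] at h
    rw [hφdef, h]
  set t := ‖(deriv ψ 0)‖ with htdef
  have htle : t ≤ 1 := ht1
  have htnn : 0 ≤ t := norm_nonneg _
  rcases lt_or_eq_of_le htle with hlt | heqt
  · have hlt' : ‖(φ 0)‖ < 1 := by rw [hφ0, ← htdef]; exact hlt
    obtain ⟨φ1, han, h10, h1b, hA4, hA5⟩ := schur_step hφan hφb hlt'
    obtain ⟨hv1, hv2⟩ := schwarz_two han h10 h1b
    set v1 := deriv φ1 0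
    set v2 := iteratedDeriv 2 φ1 0 / 2
    set e : ℝ := 1 - ‖(φ 0)‖^2 with hedef
    have hepos : (0:ℝ) < e := by
      rw [hedef, hφ0, ← htdef]; nlinarith
    have habse : ‖((e:ℝ):ℂ)‖ = e := by
      rw [Complex.norm_real, Real.norm_eq_abs, _root_.abs_of_nonneg hepos.le]
    -- |w2| = e |v1|, |w3| ≤ e|v2| + t e |v1|²
    have hw2abs : ‖(iteratedDeriv 2 ψ 0 / 2)‖ = e * ‖v1‖ := by
      rw [hw2, hA4, norm_mul, habse]
    have hw3abs : ‖(iteratedDeriv 3 ψ 0 / 6)‖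
        ≤ e * ‖v2‖ + t * e * ‖v1‖ ^ 2 := by
      rw [hw3]
      have : iteratedDeriv 2 φ 0 / 2 = ((e:ℝ):ℂ) * v2 - (starRingEnd ℂ) (φ 0) * ((e:ℝ):ℂ) * v1^2 := by
        rw [hA5]; push_cast; ring
      rw [this]
      calc ‖(((e:ℝ):ℂ) * v2 - (starRingEnd ℂ) (φ 0) * ((e:ℝ):ℂ) * v1^2)‖
          ≤ ‖(((e:ℝ):ℂ) * v2)‖ + ‖((starRingEnd ℂ) (φ 0) * ((e:ℝ):ℂ) * v1^2)‖ :=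
            norm_sub_le _ _
        _ = e * ‖v2‖ + t * e * ‖v1‖ ^ 2 := by
            rw [norm_mul, norm_mul, norm_mul, habse, Complex.norm_conj, hφ0, ← htdef, norm_pow]
            try ring
    have hte : e = 1 - t^2 := by rw [hedef, hφ0, ← htdef]
    set A1 := ‖v1‖
    set A2 := ‖v2‖
    have hA1nn : 0 ≤ A1 := norm_nonneg _
    have hA2nn : 0 ≤ A2 := norm_nonneg _
    have hv1' : A1 ≤ 1 := hv1
    have hv2' : A2 ≤ 1 - A1^2 := hv2
    rw [hw2abs]
    calc ‖(iteratedDeriv 3 ψ 0 / 6)‖ * (1 + t)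
        ≤ (e * A2 + t * e * A1 ^ 2) * (1 + t) := by
          apply mul_le_mul_of_nonneg_right hw3abs (by linarith)
      _ ≤ (1 - t^2) * (1 + t) - (e * A1)^2 := by
          rw [hte]
          have key : 0 ≤ (1 - t^2) * (1 + t) * (1 - A2 - A1^2) := by
            apply mul_nonneg (mul_nonneg (by nlinarith) (by linarith))
            nlinarith
          nlinarith [key]
  · -- t = 1 : maximum modulus case
    have heq1 : ‖(φ 0)‖ = 1 := by rw [hφ0, ← htdef, ← heqt]
    obtain ⟨hd1, hd2⟩ := maxmod_consts hφan hφb heq1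
    rw [hw2, hw3, hd1, hd2]
    simp only [zero_div, norm_zero, zero_mul]
    rw [← heqt]
    nlinarith

lemma itd_deriv (n : ℕ) (f : ℂ → ℂ) : iteratedDeriv n (deriv f) 0 = iteratedDeriv (n+1) f 0 := by
  rw [iteratedDeriv_succ']

lemma itd2 (F : ℂ → ℂ) (x : ℂ) : iteratedDeriv 2 F x = deriv (deriv F) x := by
  rw [show (2:ℕ) = 1 + 1 from rfl, iteratedDeriv_succ, iteratedDeriv_one]

lemma itd3 (F : ℂ → ℂ) (x : ℂ) : iteratedDeriv 3 F x = deriv (iteratedDeriv 2 F) x := by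
  rw [show (3:ℕ) = 2 + 1 from rfl, iteratedDeriv_succ]

lemma itd4 (F : ℂ → ℂ) (x : ℂ) : iteratedDeriv 4 F x = deriv (iteratedDeriv 3 F) x := by
  rw [show (4:ℕ) = 3 + 1 from rfl, iteratedDeriv_succ]

/-- the key real inequality -/
lemma final_real (t s u : ℝ) (ht0 : 0 ≤ t) (ht : t ≤ 1) (hs0 : 0 ≤ s) (hs : s ≤ 1 - t^2)
    (hu0 : 0 ≤ u) (hu : u * (1+t) ≤ (1 - t^2)*(1+t) - s^2) :
    2*t^3 + (4/3)*t*s + (2/3)*u ≤ 2 := by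
  have ht1 : (0:ℝ) < 1 + t := by linarith
  rcases le_or_gt t (1/2) with h | h
  · nlinarith [sq_nonneg (s - t - t^2), mul_nonneg (by linarith : (0:ℝ) ≤ 1+t)
      (by nlinarith : (0:ℝ) ≤ 1 - 2*t^3), mul_pos ht1 ht1]
  · nlinarith [mul_nonneg (by linarith : (0:ℝ) ≤ 1 - t^2 - s)
      (by nlinarith : (0:ℝ) ≤ 2*t^2 + t - 1), sq_nonneg (1 - t^2 - s),
      mul_nonneg (mul_nonneg ht0 ht0) ht0, mul_pos ht1 ht1]

section Koebe

/-- derivative computations for the Koebe function -/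
lemma koebe_iter :
    iteratedDeriv 2 (fun z : ℂ => z / (1 - z)^2) 0 = 4 ∧
    iteratedDeriv 3 (fun z : ℂ => z / (1 - z)^2) 0 = 18 ∧
    iteratedDeriv 4 (fun z : ℂ => z / (1 - z)^2) 0 = 96 := by
  set s : Set ℂ := {z : ℂ | z ≠ 1} with hsdef
  have hs : IsOpen s := isOpen_ne
  have h0s : (0:ℂ) ∈ s := by simp [hsdef]
  have hsub : ∀ z : ℂ, z ∈ s → (1:ℂ) - z ≠ 0 := by
    intro z hz h
    rw [sub_eq_zero] at h
    exact hz h.symm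
  -- generic derivative step
  have step : ∀ (a b : ℂ) (k : ℕ), ∀ z ∈ s,
      HasDerivAt (fun w => (a + b*w) / (1-w)^(k+2))
        ((b*(1-z) + (k+2)*(a+b*z)) / (1-z)^(k+3)) z := by
    intro a b k z hz
    have hne := hsub z hz
    have hn : HasDerivAt (fun w : ℂ => a + b*w) b z := by
      simpa using ((hasDerivAt_id z).const_mul b).const_add a
    have hd : HasDerivAt (fun w : ℂ => (1-w)^(k+2))
        (((k:ℂ)+2) * (1-z)^(k+1) * (-1)) z := by
      have h1 : HasDerivAt (fun w : ℂ => 1 - w) (-1) z := by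
        simpa using (hasDerivAt_id z).const_sub 1
      have := h1.fun_pow (k+2)
      refine this.congr_deriv ?_
      push_cast
      ring_nf
    have hdiv := hn.fun_div hd (pow_ne_zero _ hne)
    refine hdiv.congr_deriv ?_
    rw [div_eq_div_iff (pow_ne_zero 2 (pow_ne_zero _ hne)) (pow_ne_zero _ hne)]
    field_simp
    ring
  -- pointwise derivatives
  have e1 : EqOn (deriv (fun z : ℂ => z / (1-z)^2)) (fun z => (1 + z)/(1-z)^3) s := by
    intro z hz
    have h := step 0 1 0 z hz
    simp only [zero_add, one_mul, Nat.cast_ofNat] at h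
    have h2 : deriv (fun w : ℂ => (0 + 1*w) / (1-w)^(0+2)) z
        = (1*(1-z) + ((0:ℕ)+2)*(0+1*z)) / (1-z)^(0+3) := (step 0 1 0 z hz).deriv
    have h3 : (fun w : ℂ => (0 + 1*w) / (1-w)^(0+2)) = fun w : ℂ => w / (1-w)^2 := by
      funext w; norm_num
    rw [h3] at h2
    rw [h2]
    push_cast
    ring_nf
  have e2 : EqOn (deriv (fun z : ℂ => (1 + z)/(1-z)^3)) (fun z => (4 + 2*z)/(1-z)^4) s := by
    intro z hz
    have h2 : deriv (fun w : ℂ => (1 + 1*w) / (1-w)^(1+2) : ℂ → ℂ) z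
        = (1*(1-z) + ((1:ℕ)+2)*(1+1*z)) / (1-z)^(1+3) := (step 1 1 1 z hz).deriv
    have h3 : (fun w : ℂ => (1 + 1*w) / (1-w)^(1+2)) = fun w : ℂ => (1 + w) / (1-w)^3 := by
      funext w; norm_num
    rw [h3] at h2
    rw [h2]
    push_cast
    ring_nf
  have e3 : EqOn (deriv (fun z : ℂ => (4 + 2*z)/(1-z)^4)) (fun z => (18 + 6*z)/(1-z)^5) s := by
    intro z hz
    have h2 : deriv (fun w : ℂ => (4 + 2*w) / (1-w)^(2+2) : ℂ → ℂ) z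
        = (2*(1-z) + ((2:ℕ)+2)*(4+2*z)) / (1-z)^(2+3) := (step 4 2 2 z hz).deriv
    have h3 : (fun w : ℂ => (4 + 2*w) / (1-w)^(2+2)) = fun w : ℂ => (4 + 2*w) / (1-w)^4 := by
      funext w; norm_num
    rw [h3] at h2
    rw [h2]
    push_cast
    ring_nf
  have e4 : EqOn (deriv (fun z : ℂ => (18 + 6*z)/(1-z)^5)) (fun z => (96 + 24*z)/(1-z)^6) s := by
    intro z hz
    have h2 : deriv (fun w : ℂ => (18 + 6*w) / (1-w)^(3+2) : ℂ → ℂ) z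
        = (6*(1-z) + ((3:ℕ)+2)*(18+6*z)) / (1-z)^(3+3) := (step 18 6 3 z hz).deriv
    have h3 : (fun w : ℂ => (18 + 6*w) / (1-w)^(3+2)) = fun w : ℂ => (18 + 6*w) / (1-w)^5 := by
      funext w; norm_num
    rw [h3] at h2
    rw [h2]
    push_cast
    ring_nf
  -- assemble: iterated derivatives at 0
  have i2 : EqOn (iteratedDeriv 2 (fun z : ℂ => z / (1-z)^2)) (fun z => (4 + 2*z)/(1-z)^4) s := by
    intro z hz
    rw [itd2, deriv_congr_of_eqOn e1 hs hz]
    exact e2 hz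
  have i3 : EqOn (iteratedDeriv 3 (fun z : ℂ => z / (1-z)^2)) (fun z => (18 + 6*z)/(1-z)^5) s := by
    intro z hz
    rw [itd3, deriv_congr_of_eqOn i2 hs hz]
    exact e3 hz
  have i4 : iteratedDeriv 4 (fun z : ℂ => z / (1-z)^2) 0 = (96 + 24*0)/(1-0)^6 := by
    rw [itd4, deriv_congr_of_eqOn i3 hs h0s]
    exact e4 h0s
  refine ⟨?_, ?_, ?_⟩
  · rw [i2 h0s]; norm_num
  · rw [i3 h0s]; norm_num
  · rw [i4]; norm_num

end Koebe

/-- Generalized Zalcman inequality `|a₂a₃ − a₄| ≤ 2` for starlike functions on the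
unit disk, with sharpness attained by the Koebe function `z / (1-z)²`. -/
theorem zalcman_a2a3_a4_starlike (f : ℂ → ℂ)
    (hf : AnalyticOnNhd ℂ f (Metric.ball 0 1))
    (hf0 : f 0 = 0) (hf'0 : deriv f 0 = 1)
    (hinj : Set.InjOn f (Metric.ball 0 1))
    (hstar : ∀ z ∈ Metric.ball (0 : ℂ) 1, z ≠ 0 →
      0 < (z * deriv f z / f z).re) :
    ‖((iteratedDeriv 2 f 0 / (Nat.factorial 2 : ℂ))
        * (iteratedDeriv 3 f 0 / (Nat.factorial 3 : ℂ))
        - iteratedDeriv 4 f 0 / (Nat.factorial 4 : ℂ))‖ ≤ 2 ∧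
    ‖((iteratedDeriv 2 (fun z : ℂ => z / (1 - z) ^ 2) 0 / (Nat.factorial 2 : ℂ))
        * (iteratedDeriv 3 (fun z : ℂ => z / (1 - z) ^ 2) 0 / (Nat.factorial 3 : ℂ))
        - iteratedDeriv 4 (fun z : ℂ => z / (1 - z) ^ 2) 0 / (Nat.factorial 4 : ℂ))‖ = 2 := by
  have h0B : (0:ℂ) ∈ ball (0:ℂ) 1 := by simp
  constructor
  · -- main inequality
    set g : ℂ → ℂ := dslope f 0 with hgdef
    have hg_an : AnalyticOnNhd ℂ g (ball 0 1) := analyticOnNhd_dslope hf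
    have hg0 : g 0 = 1 := by rw [hgdef, dslope_same, hf'0]
    have hfz : ∀ z ∈ ball (0:ℂ) 1, z ≠ 0 → f z ≠ 0 := by
      intro z hz hz0
      have := hinj.ne hz h0B hz0
      rwa [hf0] at this
    have hgz : ∀ z ∈ ball (0:ℂ) 1, z ≠ 0 → g z = z⁻¹ * f z := by
      intro z hz hz0
      rw [hgdef, dslope_of_ne _ hz0, slope_def_field, hf0, sub_zero, sub_zero,
        div_eq_inv_mul]
    have hgne : ∀ z ∈ ball (0:ℂ) 1, g z ≠ 0 := by
      intro z hz
      rcases eq_or_ne z 0 with rfl | hz0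
      · rw [hg0]; exact one_ne_zero
      · rw [hgz z hz hz0]
        exact mul_ne_zero (inv_ne_zero hz0) (hfz z hz hz0)
    set p : ℂ → ℂ := fun z => deriv f z / g z with hpdef
    have hp_an : AnalyticOnNhd ℂ p (ball 0 1) := fun z hz =>
      (hf.deriv z hz).div (hg_an z hz) (hgne z hz)
    have hp0 : p 0 = 1 := by
      show deriv f 0 / g 0 = 1
      rw [hf'0, hg0]; norm_num
    have hpg : EqOn (fun z => p z * g z) (deriv f) (ball (0:ℂ) 1) := by
      intro z hz
      exact div_mul_cancel₀ _ (hgne z hz)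
    have hrep : ∀ z ∈ ball (0:ℂ) 1, 0 < (p z).re := by
      intro z hz
      rcases eq_or_ne z 0 with rfl | hz0
      · rw [hp0]; norm_num
      · have h1 : p z = z * deriv f z / f z := by
          show deriv f z / g z = _
          rw [hgz z hz hz0, div_eq_div_iff (mul_ne_zero (inv_ne_zero hz0) (hfz z hz hz0))
            (hfz z hz hz0)]
          field_simp
        rw [h1]; exact hstar z hz hz0
    have hp1ne : ∀ z ∈ ball (0:ℂ) 1, p z + 1 ≠ 0 := by
      intro z hz h
      have h2 : (p z + 1).re = (p z).re + 1 := by simp [Complex.add_re]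
      rw [h] at h2
      simp only [Complex.zero_re] at h2
      nlinarith [hrep z hz]
    set ω : ℂ → ℂ := fun z => (p z - 1)/(p z + 1) with hωdef
    have hω_an : AnalyticOnNhd ℂ ω (ball 0 1) := fun z hz =>
      ((hp_an z hz).sub analyticAt_const).div ((hp_an z hz).add analyticAt_const)
        (hp1ne z hz)
    have hω0 : ω 0 = 0 := by
      show (p 0 - 1)/(p 0 + 1) = 0
      rw [hp0]; norm_num
    have hωb : ∀ z ∈ ball (0:ℂ) 1, ‖ω z‖ ≤ 1 := by
      intro z hz
      have key : Complex.normSq (p z - 1) ≤ Complex.normSq (p z + 1) := by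
        simp only [Complex.normSq_apply, Complex.sub_re, Complex.sub_im, Complex.add_re,
          Complex.add_im, Complex.one_re, Complex.one_im]
        nlinarith [hrep z hz]
      show ‖(p z - 1)/(p z + 1)‖ ≤ 1
      simp only [norm_div]
      rw [div_le_one (norm_pos_iff.mpr (hp1ne z hz))]
      rw [Complex.norm_def, Complex.norm_def]
      exact Real.sqrt_le_sqrt key
    have hωid : EqOn (fun z => ω z * (p z + 1)) (fun z => p z - 1) (ball (0:ℂ) 1) := by
      intro z hz
      exact div_mul_cancel₀ _ (hp1ne z hz)
    have hq_an : AnalyticOnNhd ℂ (fun z => p z + 1) (ball 0 1) := fun z hz =>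
      (hp_an z hz).add analyticAt_const
    have hfa : AnalyticAt ℂ f 0 := hf 0 h0B
    -- g coefficients
    have hg1 : deriv g 0 = iteratedDeriv 2 f 0 / 2 := by
      have h := tc_dslope hfa 1
      rw [tc_one, tc] at h
      norm_num [Nat.factorial] at h
      rw [hgdef, h]
    have hg2 : iteratedDeriv 2 g 0 = iteratedDeriv 3 f 0 / 3 := by
      have h := tc_dslope hfa 2
      rw [tc, tc] at h
      norm_num [Nat.factorial] at h
      rw [hgdef]
      linear_combination 2 * h
    have hg3 : iteratedDeriv 3 g 0 = iteratedDeriv 4 f 0 / 4 := by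
      have h := tc_dslope hfa 3
      rw [tc, tc] at h
      norm_num [Nat.factorial] at h
      rw [hgdef]
      linear_combination 6 * h
    -- relations from z f' = p f  (in the form  p * g = f')
    have hr2 : iteratedDeriv 2 (deriv f) 0 = iteratedDeriv 3 f 0 := by
      have h := itd_deriv 2 f
      norm_num at h
      exact h
    have hr3 : iteratedDeriv 3 (deriv f) 0 = iteratedDeriv 4 f 0 := by
      have h := itd_deriv 3 f
      norm_num at h
      exact h
    have he1 : deriv p 0 * g 0 + p 0 * deriv g 0 = iteratedDeriv 2 f 0 := by
      rw [← deriv_fun_mul (hp_an 0 h0B).differentiableAt (hg_an 0 h0B).differentiableAt,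
        deriv_congr_of_eqOn hpg isOpen_ball h0B, ← itd2]
    have he2 : iteratedDeriv 2 p 0 * g 0 + 2 * deriv p 0 * deriv g 0
        + p 0 * iteratedDeriv 2 g 0 = iteratedDeriv 3 f 0 := by
      rw [← iteratedDeriv_two_mul hp_an hg_an isOpen_ball h0B,
        hpg.iteratedDeriv_of_isOpen isOpen_ball 2 h0B, hr2]
    have he3 : iteratedDeriv 3 p 0 * g 0 + 3 * iteratedDeriv 2 p 0 * deriv g 0
        + 3 * deriv p 0 * iteratedDeriv 2 g 0 + p 0 * iteratedDeriv 3 g 0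
        = iteratedDeriv 4 f 0 := by
      rw [← iteratedDeriv_three_mul hp_an hg_an isOpen_ball h0B,
        hpg.iteratedDeriv_of_isOpen isOpen_ball 3 h0B, hr3]
    simp only [hp0, hg0, hg1, hg2, hg3] at he1 he2 he3
    -- relations from  ω (p+1) = p − 1
    have hq1 : deriv (fun z => p z + 1) 0 = deriv p 0 := deriv_add_const 1
    have hq2 : iteratedDeriv 2 (fun z => p z + 1) 0 = iteratedDeriv 2 p 0 :=
      iteratedDeriv_add_const 1 p 1 0
    have hs1 : deriv (fun z => p z - 1) 0 = deriv p 0 := deriv_sub_const 1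
    have hs2 : iteratedDeriv 2 (fun z => p z - 1) 0 = iteratedDeriv 2 p 0 := by
      have h' : (fun z => p z - 1) = fun z => p z + (-1) := funext fun z => by ring
      rw [h']
      exact iteratedDeriv_add_const 1 p (-1) 0
    have hs3 : iteratedDeriv 3 (fun z => p z - 1) 0 = iteratedDeriv 3 p 0 := by
      have h' : (fun z => p z - 1) = fun z => p z + (-1) := funext fun z => by ring
      rw [h']
      exact iteratedDeriv_add_const 2 p (-1) 0
    have ho1 : deriv ω 0 * (p 0 + 1) + ω 0 * deriv p 0 = deriv p 0 := by
      have hR := deriv_congr_of_eqOn hωid isOpen_ball h0B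
      rw [deriv_fun_mul (hω_an 0 h0B).differentiableAt (hq_an 0 h0B).differentiableAt,
        hq1, hs1] at hR
      exact hR
    have ho2 : iteratedDeriv 2 ω 0 * (p 0 + 1) + 2 * deriv ω 0 * deriv p 0
        + ω 0 * iteratedDeriv 2 (fun z => p z + 1) 0 = iteratedDeriv 2 p 0 := by
      have hR := hωid.iteratedDeriv_of_isOpen isOpen_ball 2 h0B
      rw [iteratedDeriv_two_mul hω_an hq_an isOpen_ball h0B, hq1, hs2] at hR
      exact hR
    have ho3 : iteratedDeriv 3 ω 0 * (p 0 + 1) + 3 * iteratedDeriv 2 ω 0 * deriv p 0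
        + 3 * deriv ω 0 * iteratedDeriv 2 (fun z => p z + 1) 0
        + ω 0 * iteratedDeriv 3 (fun z => p z + 1) 0 = iteratedDeriv 3 p 0 := by
      have hR := hωid.iteratedDeriv_of_isOpen isOpen_ball 3 h0B
      rw [iteratedDeriv_three_mul hω_an hq_an isOpen_ball h0B, hq1, hs3] at hR
      exact hR
    simp only [hp0, hω0, hq2] at ho1 ho2 ho3
    -- solve
    have hc1 : deriv p 0 = 2 * deriv ω 0 := by linear_combination -ho1
    have hc2 : iteratedDeriv 2 p 0 = 2 * iteratedDeriv 2 ω 0 + 4 * (deriv ω 0)^2 := by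
      rw [hc1] at ho2
      linear_combination -ho2
    have hc3 : iteratedDeriv 3 p 0 = 2 * iteratedDeriv 3 ω 0
        + 12 * deriv ω 0 * iteratedDeriv 2 ω 0 + 12 * (deriv ω 0)^3 := by
      rw [hc1, hc2] at ho3
      linear_combination -ho3
    have hA2 : iteratedDeriv 2 f 0 = 4 * deriv ω 0 := by
      rw [hc1] at he1
      linear_combination -2 * he1
    have hA3 : iteratedDeriv 3 f 0 = 3 * iteratedDeriv 2 ω 0 + 18 * (deriv ω 0)^2 := by
      rw [hc1, hc2, hA2] at he2
      linear_combination (-3/2) * he2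
    have hA4 : iteratedDeriv 4 f 0 = (8/3) * iteratedDeriv 3 ω 0
        + 40 * deriv ω 0 * iteratedDeriv 2 ω 0 + 96 * (deriv ω 0)^3 := by
      rw [hc1, hc2, hc3, hA2, hA3] at he3
      linear_combination (-4/3) * he3
    -- final value identity
    have hval : (iteratedDeriv 2 f 0 / (Nat.factorial 2 : ℂ))
        * (iteratedDeriv 3 f 0 / (Nat.factorial 3 : ℂ))
        - iteratedDeriv 4 f 0 / (Nat.factorial 4 : ℂ)
        = 2 * (deriv ω 0)^3 - (2/3) * deriv ω 0 * iteratedDeriv 2 ω 0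
          - iteratedDeriv 3 ω 0 / 9 := by
      rw [hA2, hA3, hA4,
        show ((Nat.factorial 2 : ℕ) : ℂ) = 2 by norm_num [Nat.factorial],
        show ((Nat.factorial 3 : ℕ) : ℂ) = 6 by norm_num [Nat.factorial],
        show ((Nat.factorial 4 : ℕ) : ℂ) = 24 by norm_num [Nat.factorial]]
      ring
    rw [hval]
    -- Schwarz coefficients bounds
    obtain ⟨hT, hS, hU⟩ := schwarz_three hω_an hω0 hωb
    set t : ℝ := ‖(deriv ω 0)‖ with htdef
    set s : ℝ := ‖(iteratedDeriv 2 ω 0 / 2)‖ with hsdef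
    set u : ℝ := ‖(iteratedDeriv 3 ω 0 / 6)‖ with hudef
    have htri : ‖(2 * (deriv ω 0)^3 - (2/3) * deriv ω 0 * iteratedDeriv 2 ω 0
          - iteratedDeriv 3 ω 0 / 9)‖ ≤ 2*t^3 + (4/3)*t*s + (2/3)*u := by
      have t1 : ‖(2 * (deriv ω 0)^3)‖ = 2*t^3 := by
        rw [norm_mul, norm_pow, Complex.norm_two, htdef]
      have t2 : ‖((2/3) * deriv ω 0 * iteratedDeriv 2 ω 0)‖ = (4/3)*t*s := by
        rw [show ((2:ℂ)/3) * deriv ω 0 * iteratedDeriv 2 ω 0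
            = (((4:ℝ)/3 : ℝ) : ℂ) * (deriv ω 0 * (iteratedDeriv 2 ω 0 / 2)) by push_cast; ring,
          norm_mul, norm_mul, Complex.norm_real, Real.norm_eq_abs,
          _root_.abs_of_nonneg (by norm_num : (0:ℝ) ≤ 4/3), ← htdef, ← hsdef]
        ring
      have t3 : ‖(iteratedDeriv 3 ω 0 / 9)‖ = (2/3)*u := by
        rw [show (iteratedDeriv 3 ω 0 / 9 : ℂ)
            = (((2:ℝ)/3 : ℝ) : ℂ) * (iteratedDeriv 3 ω 0 / 6) by push_cast; ring,
          norm_mul, Complex.norm_real, Real.norm_eq_abs,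
          _root_.abs_of_nonneg (by norm_num : (0:ℝ) ≤ 2/3), ← hudef]
      calc ‖(2 * (deriv ω 0)^3 - (2/3) * deriv ω 0 * iteratedDeriv 2 ω 0
          - iteratedDeriv 3 ω 0 / 9)‖
          ≤ ‖(2 * (deriv ω 0)^3 - (2/3) * deriv ω 0 * iteratedDeriv 2 ω 0)‖
            + ‖(iteratedDeriv 3 ω 0 / 9)‖ := norm_sub_le _ _
        _ ≤ ‖(2 * (deriv ω 0)^3)‖ + ‖((2/3) * deriv ω 0 * iteratedDeriv 2 ω 0)‖
            + ‖(iteratedDeriv 3 ω 0 / 9)‖ := by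
              have := norm_sub_le (2 * (deriv ω 0)^3)
                ((2/3) * deriv ω 0 * iteratedDeriv 2 ω 0)
              linarith
        _ = 2*t^3 + (4/3)*t*s + (2/3)*u := by rw [t1, t2, t3]
    refine le_trans htri ?_
    exact final_real t s u (norm_nonneg _) hT (norm_nonneg _) hS
      (norm_nonneg _) hU
  · -- Koebe function
    obtain ⟨k2, k3, k4⟩ := koebe_iter
    rw [k2, k3, k4,
      show ((Nat.factorial 2 : ℕ) : ℂ) = 2 by norm_num [Nat.factorial],
      show ((Nat.factorial 3 : ℕ) : ℂ) = 6 by norm_num [Nat.factorial],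
      show ((Nat.factorial 4 : ℕ) : ℂ) = 24 by norm_num [Nat.factorial]]
    norm_num
end

section
/- Let X be a complex Banach space with unit ball B, F : B → X holomorphic with F(0)=0, DF(0)=I, of the form F(z) = f(z)z with f : B → ℂ holomorphic, f(0)=1. Fix z ∈ X \ {0} and l_z ∈ X* with l_z(z) = ‖z‖, ‖l_z‖ = 1, and define h(ζ) = ζ / l_z((DF(ζz/‖z‖))⁻¹ F(ζz/‖z‖)) for ζ ≠ 0, h(0) = 1. Then l_z(D²F(0)(z²))/(2!‖z‖²) = h'(0), l_z(D³F(0)(z³))/(3!‖z‖³) = (1/2)(h''(0)/2 + h'(0)²), and l_z(D⁴F(0)(z⁴))/(4!‖z‖⁴) = (1/3)(h'''(0)/6 + h'(0)³/2 + (3/4)h'(0)h''(0)). -/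
open Filter Topology

private lemma analyticAt_deriv' {g : ℂ → ℂ} {x : ℂ} (hg : AnalyticAt ℂ g x) :
    AnalyticAt ℂ (deriv g) x := by
  obtain ⟨s, hs, hgs⟩ := hg.eventually_analyticAt.exists_mem
  exact AnalyticOnNhd.deriv (fun y hy => hgs y hy) x (mem_of_mem_nhds hs)

private lemma ev_deriv_id_mul {q : ℂ → ℂ} (hq : AnalyticAt ℂ q 0) :
    deriv (fun ζ => ζ * q ζ) =ᶠ[𝓝 0] fun ζ => q ζ + ζ * deriv q ζ := by
  filter_upwards [hq.eventually_analyticAt] with ζ hq'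
  rw [deriv_fun_mul differentiableAt_fun_id hq'.differentiableAt, deriv_id'']
  ring

private lemma ev_deriv_add_mul {u v : ℂ → ℂ} (hu : AnalyticAt ℂ u 0) (hv : AnalyticAt ℂ v 0) :
    deriv (fun ζ => u ζ + ζ * v ζ) =ᶠ[𝓝 0] fun ζ => deriv u ζ + (v ζ + ζ * deriv v ζ) := by
  filter_upwards [hu.eventually_analyticAt, hv.eventually_analyticAt] with ζ hu' hv'
  rw [deriv_fun_add hu'.differentiableAt (differentiableAt_fun_id.fun_mul hv'.differentiableAt),
    deriv_fun_mul differentiableAt_fun_id hv'.differentiableAt, deriv_id'']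
  ring

private lemma id_mul_derivs {q : ℂ → ℂ} (hq : AnalyticAt ℂ q 0) :
    deriv (fun ζ => ζ * q ζ) 0 = q 0 ∧
    deriv (deriv (fun ζ => ζ * q ζ)) 0 = 2 * deriv q 0 ∧
    deriv (deriv (deriv (fun ζ => ζ * q ζ))) 0 = 3 * deriv (deriv q) 0 ∧
    deriv (deriv (deriv (deriv (fun ζ => ζ * q ζ)))) 0
      = 4 * deriv (deriv (deriv q)) 0 := by
  have hq1 : AnalyticAt ℂ (deriv q) 0 := analyticAt_deriv' hq
  have hq2 : AnalyticAt ℂ (deriv (deriv q)) 0 := analyticAt_deriv' hq1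
  have hq3 : AnalyticAt ℂ (deriv (deriv (deriv q))) 0 := analyticAt_deriv' hq2
  have e1 : deriv (fun ζ => ζ * q ζ) =ᶠ[𝓝 0] fun ζ => q ζ + ζ * deriv q ζ :=
    ev_deriv_id_mul hq
  have e2 : deriv (fun ζ => q ζ + ζ * deriv q ζ) =ᶠ[𝓝 0]
      fun ζ => (deriv q ζ + deriv q ζ) + ζ * deriv (deriv q) ζ := by
    filter_upwards [ev_deriv_add_mul hq hq1] with ζ hζ
    rw [hζ]; ring
  have e3 : deriv (fun ζ => (deriv q ζ + deriv q ζ) + ζ * deriv (deriv q) ζ) =ᶠ[𝓝 0]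
      fun ζ => (deriv (deriv q) ζ + deriv (deriv q) ζ + deriv (deriv q) ζ)
        + ζ * deriv (deriv (deriv q)) ζ := by
    filter_upwards [hq1.eventually_analyticAt, hq2.eventually_analyticAt] with ζ h1 h2
    rw [deriv_fun_add (h1.differentiableAt.fun_add h1.differentiableAt)
        (differentiableAt_fun_id.fun_mul h2.differentiableAt),
      deriv_fun_add h1.differentiableAt h1.differentiableAt,
      deriv_fun_mul differentiableAt_fun_id h2.differentiableAt, deriv_id'']
    ring
  refine ⟨?_, ?_, ?_, ?_⟩
  · rw [e1.eq_of_nhds]; simp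
  · rw [(e1.deriv).eq_of_nhds, e2.eq_of_nhds]; ring
  · rw [(e1.deriv.deriv).eq_of_nhds, (e2.deriv).eq_of_nhds, e3.eq_of_nhds]; ring
  · rw [(e1.deriv.deriv.deriv).eq_of_nhds, (e2.deriv.deriv).eq_of_nhds, (e3.deriv).eq_of_nhds,
      deriv_fun_add ((hq2.differentiableAt.fun_add hq2.differentiableAt).fun_add hq2.differentiableAt)
        (differentiableAt_fun_id.fun_mul hq3.differentiableAt),
      deriv_fun_add (hq2.differentiableAt.fun_add hq2.differentiableAt) hq2.differentiableAt,
      deriv_fun_add hq2.differentiableAt hq2.differentiableAt,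
      deriv_fun_mul differentiableAt_fun_id hq3.differentiableAt, deriv_id'']
    ring

/-- Relations between the diagonal homogeneous expansion terms of
`F(z) = f(z)·z` and the derivatives at `0` of the auxiliary disk function
`h(ζ) = ζ / l_z((DF(ζz₀))⁻¹F(ζz₀))`, `z₀ = z/‖z‖`:
`l_z(D²F(0)(z²))/(2!‖z‖²) = h'(0)`,
`l_z(D³F(0)(z³))/(3!‖z‖³) = (1/2)(h''(0)/2 + h'(0)²)`, and
`l_z(D⁴F(0)(z⁴))/(4!‖z‖⁴) = (1/3)(h'''(0)/6 + h'(0)³/2 + (3/4)h'(0)h''(0))`. -/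
theorem disk_function_coeff_relations {X : Type*} [NormedAddCommGroup X]
    [NormedSpace ℂ X] [CompleteSpace X]
    (f : X → ℂ) (F : X → X)
    (hf : AnalyticOnNhd ℂ f (Metric.ball 0 1)) (hf0 : f 0 = 1)
    (hF : ∀ w, F w = f w • w)
    (z : X) (hz : z ∈ Metric.ball (0 : X) 1) (hz0 : z ≠ 0)
    (l : X →L[ℂ] ℂ) (hlz : l z = (‖z‖ : ℂ)) (hln : ‖l‖ = 1)
    (hinv : ∀ ζ ∈ Metric.ball (0 : ℂ) 1,
      ∃ e : X ≃L[ℂ] X, (e : X →L[ℂ] X) = fderiv ℂ F (ζ • ((‖z‖ : ℂ)⁻¹ • z)))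
    (h : ℂ → ℂ) (hh0 : h 0 = 1)
    (hh : ∀ ζ : ℂ, ζ ≠ 0 →
      h ζ = ζ / l ((fderiv ℂ F (ζ • ((‖z‖ : ℂ)⁻¹ • z))).inverse
        (F (ζ • ((‖z‖ : ℂ)⁻¹ • z))))) :
    l ((Nat.factorial 2 : ℂ)⁻¹ • iteratedFDeriv ℂ 2 F 0 (fun _ => z)) / (‖z‖ : ℂ) ^ 2
        = deriv h 0 ∧
    l ((Nat.factorial 3 : ℂ)⁻¹ • iteratedFDeriv ℂ 3 F 0 (fun _ => z)) / (‖z‖ : ℂ) ^ 3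
        = (1 / 2 : ℂ) * (iteratedDeriv 2 h 0 / 2 + (deriv h 0) ^ 2) ∧
    l ((Nat.factorial 4 : ℂ)⁻¹ • iteratedFDeriv ℂ 4 F 0 (fun _ => z)) / (‖z‖ : ℂ) ^ 4
        = (1 / 3 : ℂ) * (iteratedDeriv 3 h 0 / 6 + (deriv h 0) ^ 3 / 2
            + (3 / 4 : ℂ) * deriv h 0 * iteratedDeriv 2 h 0) := by
  have hFeq : F = fun w => f w • w := funext hF
  subst hFeq
  set z₀ : X := (‖z‖ : ℂ)⁻¹ • z with hz₀def
  have hzne : ‖z‖ ≠ 0 := norm_ne_zero_iff.mpr hz0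
  have hznec : (‖z‖ : ℂ) ≠ 0 := by exact_mod_cast hzne
  have hz₀norm : ‖z₀‖ = 1 := by
    rw [hz₀def, norm_smul]
    simp [hzne]
  set g : ℂ → ℂ := fun t => f (t • z₀) with hgdef
  have hmem : ∀ ζ : ℂ, ‖ζ‖ < 1 → ζ • z₀ ∈ Metric.ball (0 : X) 1 := by
    intro ζ hζ
    rw [mem_ball_zero_iff, norm_smul, hz₀norm, mul_one]
    exact hζ
  have hganal : ∀ ζ : ℂ, ‖ζ‖ < 1 → AnalyticAt ℂ g ζ := by
    intro ζ hζ
    have h1 : AnalyticAt ℂ (fun t : ℂ => t • z₀) ζ := analyticAt_id.smul analyticAt_const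
    have h2 := AnalyticAt.comp (g := f) (f := fun t : ℂ => t • z₀) (x := ζ)
      (hf _ (hmem ζ hζ)) h1
    exact h2
  have hgA : AnalyticAt ℂ g 0 := hganal 0 (by simp)
  have hg0 : g 0 = 1 := by simp [hgdef, hf0]
  set q : ℂ → ℂ := fun ζ => deriv g ζ / g ζ with hqdef
  have hg1A : AnalyticAt ℂ (deriv g) 0 := analyticAt_deriv' hgA
  have hqA : AnalyticAt ℂ q 0 := hg1A.div hgA (by rw [hg0]; exact one_ne_zero)
  have hlz₀ : l z₀ = 1 := by
    rw [hz₀def, map_smul, hlz, smul_eq_mul, inv_mul_cancel₀ hznec]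
  -- h agrees with 1 + ζ q ζ near 0
  have hH : h =ᶠ[𝓝 0] fun ζ => 1 + ζ * q ζ := by
    have ev1 : ∀ᶠ ζ : ℂ in 𝓝 0, ‖ζ‖ < 1 := by
      filter_upwards [Metric.ball_mem_nhds (0 : ℂ) one_pos] with ζ hζ
      exact mem_ball_zero_iff.mp hζ
    have ev2 : ∀ᶠ ζ in 𝓝 (0 : ℂ), g ζ ≠ 0 :=
      hgA.continuousAt.eventually_ne (by rw [hg0]; exact one_ne_zero)
    have ev3 : ∀ᶠ ζ in 𝓝 (0 : ℂ), g ζ + ζ * deriv g ζ ≠ 0 := by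
      have hc : ContinuousAt (fun ζ : ℂ => g ζ + ζ * deriv g ζ) 0 :=
        hgA.continuousAt.add (continuousAt_id.mul hg1A.continuousAt)
      exact hc.eventually_ne (by simp [hg0])
    filter_upwards [ev1, ev2, ev3] with ζ h1 h2 h3
    rcases eq_or_ne ζ 0 with rfl | hζ0
    · simpa using hh0
    · rw [hh ζ hζ0]
      have hwmem := hmem ζ h1
      have hfw : AnalyticAt ℂ f (ζ • z₀) := hf _ hwmem
      have hgder : HasDerivAt g (fderiv ℂ f (ζ • z₀) z₀) ζ := by
        have hsm : HasDerivAt (fun t : ℂ => t • z₀) z₀ ζ := by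
          simpa using (hasDerivAt_id ζ).smul_const z₀
        exact hfw.differentiableAt.hasFDerivAt.comp_hasDerivAt ζ hsm
      have hgd : deriv g ζ = fderiv ℂ f (ζ • z₀) z₀ := hgder.deriv
      have hDF : fderiv ℂ (fun w => f w • w) (ζ • z₀)
          = f (ζ • z₀) • ContinuousLinearMap.id ℂ X
            + (fderiv ℂ f (ζ • z₀)).smulRight (ζ • z₀) :=
        (hfw.differentiableAt.hasFDerivAt.smul (hasFDerivAt_id _)).fderiv
      obtain ⟨e, he⟩ := hinv ζ (by simpa [mem_ball_zero_iff] using h1)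
      obtain ⟨c, hcdef⟩ : ∃ c : ℂ, c = ζ * g ζ / (g ζ + ζ * deriv g ζ) := ⟨_, rfl⟩
      have hgval : f (ζ • z₀) = g ζ := by rw [hgdef]
      have h6 : fderiv ℂ (fun w => f w • w) (ζ • z₀) (c • z₀)
          = (g ζ * c + c * deriv g ζ * ζ) • z₀ := by
        rw [hDF, ContinuousLinearMap.add_apply, ContinuousLinearMap.smul_apply,
          ContinuousLinearMap.id_apply, ContinuousLinearMap.smulRight_apply,
          (fderiv ℂ f (ζ • z₀)).map_smul, ← hgd, hgval]
        simp only [smul_eq_mul]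
        rw [hz₀def]
        module
      have h7 : g ζ * c + c * deriv g ζ * ζ = g ζ * ζ := by
        rw [hcdef]; field_simp
      have hec : e (c • z₀) = f (ζ • z₀) • ζ • z₀ := by
        have h5 : e (c • z₀) = fderiv ℂ (fun w => f w • w) (ζ • z₀) (c • z₀) := by
          rw [← he]; rfl
        rw [h5, h6, h7, hgval, hz₀def]
        module
      have hinvval : (fderiv ℂ (fun w => f w • w) (ζ • z₀)).inverse
          (f (ζ • z₀) • ζ • z₀) = c • z₀ := by
        rw [← he, ContinuousLinearMap.inverse_equiv, ← hec]
        simp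
      rw [hinvval, map_smul, hlz₀, smul_eq_mul, mul_one, hcdef, hqdef]
      field_simp
  -- derivatives of h at 0
  have hhd := id_mul_derivs hqA
  have hHd : deriv (fun ζ : ℂ => 1 + ζ * q ζ) = deriv (fun ζ => ζ * q ζ) := by
    funext ζ; exact deriv_const_add 1
  have hd1 : deriv h 0 = q 0 := by
    rw [hH.deriv.eq_of_nhds, hHd, hhd.1]
  have hd2 : iteratedDeriv 2 h 0 = 2 * deriv q 0 := by
    rw [Filter.EventuallyEq.iteratedDeriv_eq 2 hH, iteratedDeriv_succ, iteratedDeriv_one,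
      hHd, hhd.2.1]
  have hd3 : iteratedDeriv 3 h 0 = 3 * deriv (deriv q) 0 := by
    rw [Filter.EventuallyEq.iteratedDeriv_eq 3 hH, iteratedDeriv_succ, iteratedDeriv_succ,
      iteratedDeriv_one, hHd, hhd.2.2.1]
  -- derivatives of g at 0 in terms of q
  have egq : deriv g =ᶠ[𝓝 0] fun ζ => q ζ * g ζ := by
    filter_upwards [hgA.continuousAt.eventually_ne (hg0 ▸ one_ne_zero)] with ζ h2
    rw [hqdef]
    exact (div_mul_cancel₀ _ h2).symm
  have hA : deriv g 0 = q 0 := by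
    rw [egq.eq_of_nhds, hg0, mul_one]
  have hB : deriv (deriv g) 0 = deriv q 0 + q 0 * q 0 := by
    rw [egq.deriv.eq_of_nhds, deriv_fun_mul hqA.differentiableAt hgA.differentiableAt, hg0, hA]
    ring
  have e' : deriv (deriv g) =ᶠ[𝓝 0] fun ζ => deriv q ζ * g ζ + q ζ * deriv g ζ := by
    refine egq.deriv.trans ?_
    filter_upwards [hqA.eventually_analyticAt, hgA.eventually_analyticAt] with ζ h1 h2
    exact deriv_mul h1.differentiableAt h2.differentiableAt
  have hC : deriv (deriv (deriv g)) 0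
      = deriv (deriv q) 0 + 2 * deriv q 0 * q 0 + q 0 * (deriv q 0 + q 0 * q 0) := by
    rw [e'.deriv.eq_of_nhds,
      deriv_fun_add ((analyticAt_deriv' hqA).differentiableAt.fun_mul hgA.differentiableAt)
        (hqA.differentiableAt.fun_mul hg1A.differentiableAt),
      deriv_fun_mul (analyticAt_deriv' hqA).differentiableAt hgA.differentiableAt,
      deriv_fun_mul hqA.differentiableAt hg1A.differentiableAt, hg0, hA, hB]
    ring
  -- reduction of iterated Fréchet derivatives to the 1D function ζ ↦ ζ g ζ
  have hFan : AnalyticOnNhd ℂ (fun w : X => f w • w) (Metric.ball (0 : X) 1) :=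
    hf.smul analyticOnNhd_id
  have hkey : ∀ i : ℕ, l (iteratedFDeriv ℂ i (fun w => f w • w) 0 (fun _ => z))
      = (‖z‖ : ℂ) ^ i * iteratedDeriv i (fun ζ => ζ * g ζ) 0 := by
    intro i
    have hFcd : ContDiffOn ℂ i (fun w : X => f w • w) (Metric.ball (0 : X) 1) :=
      hFan.contDiffOn Metric.isOpen_ball.uniqueDiffOn
    set L : ℂ →L[ℂ] X :=
      ContinuousLinearMap.smulRight (ContinuousLinearMap.id ℂ ℂ) z₀ with hLdef
    have hLζ : ∀ ζ : ℂ, L ζ = ζ • z₀ := fun ζ => by simp [hLdef]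
    have h0mem : (0 : X) ∈ Metric.ball (0 : X) 1 := by simp
    have hL0 : L 0 = (0 : X) := by simp [hLζ]
    have hLpre : L 0 ∈ Metric.ball (0 : X) 1 := by rw [hL0]; exact h0mem
    have htopen : IsOpen (L ⁻¹' Metric.ball (0 : X) 1) :=
      Metric.isOpen_ball.preimage L.continuous
    have h0t : (0 : ℂ) ∈ L ⁻¹' Metric.ball (0 : X) 1 := by
      simp [Set.mem_preimage, hL0]
    have hcomp : (fun ζ : ℂ => ζ * g ζ) = (l ∘ fun w => f w • w) ∘ L := by
      funext ζ
      simp only [Function.comp_apply, hLζ, hgdef, map_smul, smul_eq_mul, hlz₀]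
      ring
    have hstep : iteratedDeriv i (fun ζ => ζ * g ζ) 0
        = l (iteratedFDeriv ℂ i (fun w => f w • w) 0 (fun _ => z₀)) := by
      rw [iteratedDeriv_eq_iteratedFDeriv, hcomp,
        ← iteratedFDerivWithin_of_isOpen i htopen h0t,
        L.iteratedFDerivWithin_comp_right (hFcd.continuousLinearMap_comp l)
          Metric.isOpen_ball.uniqueDiffOn htopen.uniqueDiffOn hLpre le_rfl,
        l.iteratedFDerivWithin_comp_left (hFcd _ hLpre) Metric.isOpen_ball.uniqueDiffOn hLpre le_rfl]
      simp only [ContinuousMultilinearMap.compContinuousLinearMap_apply,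
        ContinuousLinearMap.compContinuousMultilinearMap_coe, Function.comp_apply]
      rw [iteratedFDerivWithin_of_isOpen i Metric.isOpen_ball hLpre, hL0]
      have h9 : (fun _ : Fin i => L 1) = fun _ : Fin i => z₀ := by
        funext j; simp [hLζ]
      rw [h9]
    have hzdecomp : z = (‖z‖ : ℂ) • z₀ := by rw [hz₀def, smul_inv_smul₀ hznec]
    have hdiag : iteratedFDeriv ℂ i (fun w => f w • w) 0 (fun _ => z)
        = ((‖z‖ : ℂ) ^ i) • iteratedFDeriv ℂ i (fun w => f w • w) 0 (fun _ => z₀) := by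
      have h1 : (fun _ : Fin i => z) = fun _ : Fin i => (‖z‖ : ℂ) • z₀ := by
        funext j; rw [← hzdecomp]
      rw [h1, ContinuousMultilinearMap.map_smul_univ]
      simp [Finset.prod_const]
    rw [hdiag, map_smul, smul_eq_mul, hstep]
  have hgderivs := id_mul_derivs hgA
  have hid2 : iteratedDeriv 2 (fun ζ : ℂ => ζ * g ζ) 0 = 2 * q 0 := by
    rw [iteratedDeriv_succ, iteratedDeriv_one, hgderivs.2.1, hA]
  have hid3 : iteratedDeriv 3 (fun ζ : ℂ => ζ * g ζ) 0
      = 3 * (deriv q 0 + q 0 * q 0) := by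
    rw [iteratedDeriv_succ, iteratedDeriv_succ, iteratedDeriv_one, hgderivs.2.2.1, hB]
  have hid4 : iteratedDeriv 4 (fun ζ : ℂ => ζ * g ζ) 0
      = 4 * (deriv (deriv q) 0 + 2 * deriv q 0 * q 0 + q 0 * (deriv q 0 + q 0 * q 0)) := by
    rw [iteratedDeriv_succ, iteratedDeriv_succ, iteratedDeriv_succ, iteratedDeriv_one,
      hgderivs.2.2.2, hC]
  refine ⟨?_, ?_, ?_⟩
  · rw [map_smul, smul_eq_mul, hkey 2, hid2, hd1]
    field_simp [Nat.factorial]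
    ring
  · rw [map_smul, smul_eq_mul, hkey 3, hid3, hd1, hd2]
    field_simp [Nat.factorial]
    ring
  · rw [map_smul, smul_eq_mul, hkey 4, hid4, hd1, hd2, hd3]
    field_simp [Nat.factorial]
    ring
end
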